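/- arXiv:2211.03424 — 6 statements merged into one kernel-verified Lean document; each statement's English description precedes it below -/
import Mathlib

section
/- Let n ≥ 2 be an integer, let a ≥ 0 be a real number, and let z be a complex number with z^n = 1. Then e^{2a·Re(z)} = ∑_{j=0}^{n−1} z^j φ̂_a(j); in particular the right-hand side is a real number. -/
open scoped BigOperators

noncomputable def psi (n : ℕ) (a : ℝ) (j : ℕ) : ℝ :=
  ∑' k : ℕ, a ^ (j + k * n) / (Nat.factorial (j + k * n) : ℝ)

noncomputable def phiHat (n : ℕ) (a : ℝ) (j : ℤ) : ℝ :=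
  ∑ k ∈ Finset.range n, ∑ k' ∈ Finset.range n,
    if ((k' : ℤ) - (k : ℤ)) % (n : ℤ) = j % (n : ℤ) then psi n a k * psi n a k' else 0

noncomputable def phi (n : ℕ) (a : ℝ) (j : ℤ) : ℝ :=
  phiHat n a j / phiHat n a 0

noncomputable def eps (n : ℕ) (a : ℝ) : ℝ :=
  (1 + 2 * a * Real.exp a) * (1 + a ^ n * Real.exp a / (Nat.factorial n : ℝ)) ^ 2 - 1

noncomputable def zeta (n : ℕ) (a : ℝ) : ℝ :=
  ∑ j ∈ Finset.Ico 1 n, phi n a (j : ℤ)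

noncomputable def xi (n : ℕ) (a : ℝ) : ℝ :=
  sSup ((fun j : ℕ => phi n a (j : ℤ)) '' Set.Ico 1 n)

noncomputable def eta (n : ℕ) (a : ℝ) : ℝ :=
  sInf ((fun j : ℕ => phi n a ((j : ℤ) + 1) / phi n a (j : ℤ)) '' Set.Iio n)

noncomputable def alpha (n : ℕ) (b k : ℝ) : ℝ :=
  (∑ j ∈ Finset.range n,
      phi n b (j : ℤ) * (phi n k (j : ℤ)) ^ 4 *
        (phi n k ((j : ℤ) + 1) / (phi n k (j : ℤ) * phi n k 1))) /
    (∑ j ∈ Finset.range n, phi n b (j : ℤ) * (phi n k (j : ℤ)) ^ 4)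

noncomputable def rho (n : ℕ) (g : ℕ) : ℂ :=
  Complex.exp (2 * (Real.pi : ℂ) * Complex.I * (g : ℂ) / (n : ℂ))

noncomputable def etaHat (n : ℕ) (a : ℝ) : ℂ :=
  (∑ g ∈ Finset.range n, rho n g * (Real.exp (2 * a * (rho n g).re) : ℂ)) /
    (∑ g ∈ Finset.range n, (Real.exp (2 * a * (rho n g).re) : ℂ))

/-!
Proof idea. Splitting the exponential series by residues mod `n` gives, for every `n`-th root
of unity `w`, the identity `∑ j < n, w ^ j ψ_a(j) = exp (a w)`. Since `φ̂_a` is the cyclic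
autocorrelation of `ψ_a`, its generating polynomial at `z` factors as the product of these sums
at `z⁻¹ = conj z` and at `z`, that is `exp (a conj z) exp (a z) = exp (2 a Re z)`.
-/

open Finset ComplexConjugate

lemma zpow_emod_of_pow_eq_one {G₀ : Type*} [GroupWithZero G₀] {z : G₀} {n : ℕ} (hn : n ≠ 0)
    (hz : z ^ n = 1) (m : ℤ) : z ^ (m % n) = z ^ m := by
  have hu := zpow_eq_zpow_emod' (x := Units.ofPowEqOne z n hz hn) m
    (Units.ext (by simpa using hz))
  simpa using congrArg Units.val hu.symm

lemma sum_range_ite_emod_eq_zpow {K : Type*} [DivisionRing K] {z : K} {n : ℕ} (hn : n ≠ 0)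
    (hz : z ^ n = 1) (m : ℤ) :
    ∑ j ∈ range n, (if m % n = (j : ℤ) % n then z ^ j else 0) = z ^ m := by
  have hm : 0 ≤ m % n := Int.emod_nonneg m (by exact_mod_cast hn)
  have hlt : (m % n).toNat < n := by
    have := Int.emod_lt_of_pos m (by omega : (0 : ℤ) < n)
    omega
  have hcond : ∀ j ∈ range n, (m % n = (j : ℤ) % n ↔ (m % n).toNat = j) := by
    intro j hj
    rw [Int.emod_eq_of_lt (Int.natCast_nonneg j) (by exact_mod_cast mem_range.mp hj)]
    omega
  rw [sum_congr rfl fun j hj => if_congr (hcond j hj) rfl rfl, sum_ite_eq, if_pos (mem_range.mpr hlt),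
    ← zpow_natCast, Int.toNat_of_nonneg hm, zpow_emod_of_pow_eq_one hn hz]

lemma summable_pow_div_factorial_residue {n : ℕ} (hn : n ≠ 0) (a : ℝ) (j : ℕ) :
    Summable fun k : ℕ => a ^ (j + k * n) / ((j + k * n).factorial : ℝ) :=
  (Real.summable_pow_div_factorial a).comp_injective fun _ _ h =>
    Nat.eq_of_mul_eq_mul_right (Nat.pos_of_ne_zero hn) (Nat.add_left_cancel h)

theorem sum_range_pow_mul_psi {n : ℕ} (hn : n ≠ 0) (a : ℝ) {z : ℂ} (hz : z ^ n = 1) :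
    ∑ j ∈ range n, z ^ j * (psi n a j : ℂ) = Complex.exp (a * z) := by
  have : NeZero n := ⟨hn⟩
  have hexp : HasSum (fun m : ℕ => ((a : ℂ) * z) ^ m / (m.factorial : ℂ)) (Complex.exp (a * z)) := by
    rw [Complex.exp_eq_exp_ℂ]
    exact NormedSpace.expSeries_div_hasSum_exp _
  -- reindex `m = j + k * n` with `j < n`
  have hsplit := ((Equiv.prodComm (Fin n) ℕ).trans (Nat.divModEquiv n).symm).hasSum_iff.mpr hexp
  simp only [Function.comp_def, Equiv.trans_apply, Equiv.prodComm_apply,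
    Nat.divModEquiv_symm_apply] at hsplit
  have hfiber (j : Fin n) : HasSum (fun k : ℕ => ((a : ℂ) * z) ^ (k * n + j) /
      ((k * n + j).factorial : ℂ)) (z ^ (j : ℕ) * (psi n a j : ℂ)) := by
    have hψ := (Complex.hasSum_ofReal.mpr
      (summable_pow_div_factorial_residue hn a j).hasSum).mul_left (z ^ (j : ℕ))
    refine hψ.congr_fun fun k => ?_
    push_cast
    rw [mul_pow, add_comm (k * n), pow_add z, mul_comm k n, pow_mul z, hz, one_pow, mul_one]
    ring
  rw [← Fin.sum_univ_eq_sum_range (fun j => z ^ j * (psi n a j : ℂ)) n]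
  exact ((hsplit.prod_fiberwise hfiber).unique (hasSum_fintype _)).symm

theorem sum_range_pow_mul_phiHat {n : ℕ} (hn : n ≠ 0) (a : ℝ) {z : ℂ} (hz : z ^ n = 1) :
    ∑ j ∈ range n, z ^ j * (phiHat n a j : ℂ) =
      (∑ k ∈ range n, z⁻¹ ^ k * (psi n a k : ℂ)) * ∑ k ∈ range n, z ^ k * (psi n a k : ℂ) := by
  have hz0 : z ≠ 0 := by rintro rfl; simp [zero_pow hn] at hz
  calc ∑ j ∈ range n, z ^ j * (phiHat n a j : ℂ)
      = ∑ k ∈ range n, ∑ k' ∈ range n, (psi n a k : ℂ) * psi n a k' *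
          ∑ j ∈ range n, (if ((k' : ℤ) - k) % n = (j : ℤ) % n then z ^ j else 0) := by
        simp only [phiHat, Complex.ofReal_sum, apply_ite (fun x : ℝ => (x : ℂ)),
          Complex.ofReal_mul, Complex.ofReal_zero, mul_sum, mul_ite, mul_zero]
        rw [sum_comm]
        refine sum_congr rfl fun k _ => ?_
        rw [sum_comm]
        simp only [mul_comm]
    _ = ∑ k ∈ range n, ∑ k' ∈ range n, (psi n a k : ℂ) * psi n a k' * z ^ ((k' : ℤ) - k) := by
        simp only [sum_range_ite_emod_eq_zpow hn hz]
    _ = _ := by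
        rw [sum_mul_sum]
        refine sum_congr rfl fun k _ => sum_congr rfl fun k' _ => ?_
        rw [zpow_sub₀ hz0, zpow_natCast, zpow_natCast, inv_pow]
        field_simp

theorem statement1_general (n : ℕ) (hn : 2 ≤ n) (a : ℝ) (z : ℂ) (hz : z ^ n = 1) :
    (Real.exp (2 * a * z.re) : ℂ) =
      ∑ j ∈ Finset.range n, z ^ j * (phiHat n a (j : ℤ) : ℂ) := by
  have hn0 : n ≠ 0 := by omega
  have hconj : z⁻¹ = conj z := Complex.inv_eq_conj (Complex.norm_eq_one_of_pow_eq_one hz hn0)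
  rw [sum_range_pow_mul_phiHat hn0 a hz, sum_range_pow_mul_psi hn0 a (by rw [inv_pow, hz, inv_one]),
    sum_range_pow_mul_psi hn0 a hz, ← Complex.exp_add, ← mul_add, hconj, add_comm, Complex.add_conj,
    Complex.ofReal_exp]
  push_cast
  ring_nf

theorem statement1 (n : ℕ) (hn : 2 ≤ n) (a : ℝ) (ha : 0 ≤ a) (z : ℂ) (hz : z ^ n = 1) :
    (Real.exp (2 * a * z.re) : ℂ) =
      ∑ j ∈ Finset.range n, z ^ j * (phiHat n a (j : ℤ) : ℂ) :=
  statement1_general n hn a z hz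
end

section
/- Let n ≥ 2 be an integer, a ≥ 0 a real number, and j an integer with 1 ≤ j ≤ n−1. Then φ̂_a(j) < φ̂_a(0); consequently φ_a(j) < φ_a(0) = 1. -/
open scoped BigOperators

/-! ### Auxiliary lemmas -/

lemma psi_summable (n : ℕ) (hn : 0 < n) (a : ℝ) (j : ℕ) :
    Summable (fun k : ℕ => a ^ (j + k * n) / (Nat.factorial (j + k * n) : ℝ)) := by
  have h := Real.summable_pow_div_factorial a
  exact h.comp_injective (fun s t hst =>
    Nat.eq_of_mul_eq_mul_right hn (Nat.add_left_cancel hst))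

lemma psi_nonneg (n : ℕ) (a : ℝ) (ha : 0 ≤ a) (j : ℕ) : 0 ≤ psi n a j :=
  tsum_nonneg fun k => div_nonneg (pow_nonneg ha _) (Nat.cast_nonneg _)

lemma one_le_psi_zero (n : ℕ) (hn : 0 < n) (a : ℝ) (ha : 0 ≤ a) : 1 ≤ psi n a 0 := by
  have h := Summable.le_tsum (psi_summable n hn a 0) 0
    (fun k _ => div_nonneg (pow_nonneg ha _) (Nat.cast_nonneg _))
  rw [psi]
  exact le_trans (by norm_num) h

/-- Shifting by `j` modulo `n` is a bijection of `range n`. -/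
lemma sum_shift {M : Type*} [AddCommMonoid M] {n : ℕ} (j : ℕ) (hj : j < n) (F : ℕ → M) :
    ∑ k ∈ Finset.range n, F ((k + j) % n) = ∑ k ∈ Finset.range n, F k := by
  have hn : 0 < n := by omega
  refine Finset.sum_nbij' (fun k => (k + j) % n) (fun k => (k + (n - j)) % n) ?_ ?_ ?_ ?_ ?_
  · intro k _; exact Finset.mem_range.2 (Nat.mod_lt _ hn)
  · intro k _; exact Finset.mem_range.2 (Nat.mod_lt _ hn)
  · intro k hk
    show ((k + j) % n + (n - j)) % n = k
    rw [Nat.mod_add_mod, show k + j + (n - j) = k + n by omega, Nat.add_mod_right,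
      Nat.mod_eq_of_lt (Finset.mem_range.1 hk)]
  · intro k hk
    show ((k + (n - j)) % n + j) % n = k
    rw [Nat.mod_add_mod, show k + (n - j) + j = k + n by omega, Nat.add_mod_right,
      Nat.mod_eq_of_lt (Finset.mem_range.1 hk)]
  · intro k _; rfl

lemma cond_iff (n : ℕ) (hn : 0 < n) (j k k' : ℕ) (hk' : k' < n) :
    (((k' : ℤ) - (k : ℤ)) % (n : ℤ) = (j : ℤ) % (n : ℤ)) ↔ k' = (k + j) % n := by
  constructor
  · intro h
    have h1 : ((k' : ℤ) - (k : ℤ) + k) % n = ((j : ℤ) + k) % n := Int.ModEq.add_right k h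
    rw [sub_add_cancel] at h1
    have h2 : (k' : ℤ) % n = (k' : ℤ) :=
      Int.emod_eq_of_lt (by positivity) (by exact_mod_cast hk')
    have h3 : ((j : ℤ) + k) % n = (((j + k) % n : ℕ) : ℤ) := by
      push_cast [Int.natCast_mod]; ring_nf
    rw [h2, h3] at h1
    have : k' = (j + k) % n := by exact_mod_cast h1
    rw [this, Nat.add_comm j k]
  · intro h
    subst h
    have h3 : (((k + j) % n : ℕ) : ℤ) = ((k : ℤ) + j) % n := by
      push_cast [Int.natCast_mod]; ring_nf
    rw [h3, Int.sub_emod, Int.emod_emod_of_dvd _ dvd_rfl, ← Int.sub_emod,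
      add_sub_cancel_left]

lemma phiHat_eq (n : ℕ) (hn : 0 < n) (a : ℝ) (j : ℕ) :
    phiHat n a (j : ℤ) = ∑ k ∈ Finset.range n, psi n a k * psi n a ((k + j) % n) := by
  unfold phiHat
  refine Finset.sum_congr rfl fun k _ => ?_
  have h1 : ∀ k' ∈ Finset.range n,
      (if ((k' : ℤ) - (k : ℤ)) % (n : ℤ) = (j : ℤ) % (n : ℤ) then psi n a k * psi n a k' else 0)
        = (if k' = (k + j) % n then psi n a k * psi n a k' else 0) := by
    intro k' hk'
    exact if_congr (cond_iff n hn j k k' (Finset.mem_range.1 hk')) rfl rfl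
  rw [Finset.sum_congr rfl h1, Finset.sum_ite_eq' (Finset.range n) ((k + j) % n)
    (fun k' => psi n a k * psi n a k'), if_pos (Finset.mem_range.2 (Nat.mod_lt _ hn))]

lemma phiHat_zero_eq (n : ℕ) (hn : 0 < n) (a : ℝ) :
    phiHat n a 0 = ∑ k ∈ Finset.range n, psi n a k * psi n a k := by
  have h := phiHat_eq n hn a 0
  rw [Nat.cast_zero] at h
  rw [h]
  refine Finset.sum_congr rfl fun k hk => ?_
  rw [Nat.add_zero, Nat.mod_eq_of_lt (Finset.mem_range.1 hk)]

/-- The key generating-function identity. -/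
lemma sum_pow_mul_psi (n : ℕ) (hn : 0 < n) (a : ℝ) (x : ℂ) (hx : x ^ n = 1) :
    ∑ k ∈ Finset.range n, x ^ k * (psi n a k : ℂ) = Complex.exp (a * x) := by
  haveI : NeZero n := ⟨hn.ne'⟩
  have hsum : Summable (fun m : ℕ => ((a : ℂ) * x) ^ m / (Nat.factorial m : ℂ)) :=
    NormedSpace.expSeries_div_summable ((a : ℂ) * x)
  have hexp : Complex.exp ((a : ℂ) * x)
      = ∑' m : ℕ, ((a : ℂ) * x) ^ m / (Nat.factorial m : ℂ) := by
    rw [Complex.exp_eq_exp_ℂ, NormedSpace.exp_eq_tsum_div]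
  set f : ℕ → ℂ := fun m => ((a : ℂ) * x) ^ m / (Nat.factorial m : ℂ) with hf
  set e : (Fin n × ℕ) ≃ ℕ :=
    (Equiv.prodComm (Fin n) ℕ).trans (Nat.divModEquiv n).symm with he
  have he' : ∀ p : Fin n × ℕ, e p = p.2 * n + (p.1 : ℕ) := fun p => rfl
  have h1 : ∑' p : Fin n × ℕ, f (e p) = ∑' m, f m := e.tsum_eq f
  have hg : Summable (fun p : Fin n × ℕ => f (e p)) := hsum.comp_injective e.injective
  have h2 : ∑' p : Fin n × ℕ, f (e p) = ∑' r : Fin n, ∑' t : ℕ, f (e (r, t)) :=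
    Summable.tsum_prod' hg (fun r => hg.comp_injective (fun s t h => by
      simpa using (Prod.ext_iff.1 h).2))
  have h3 : ∑' r : Fin n, ∑' t : ℕ, f (e (r, t))
      = ∑ r : Fin n, ∑' t : ℕ, f (e (r, t)) := tsum_fintype _
  have hterm : ∀ (k : ℕ), ∀ t : ℕ,
      f (t * n + k) = x ^ k * ((a ^ (k + t * n) / (Nat.factorial (k + t * n) : ℝ) : ℝ) : ℂ) := by
    intro k t
    have hxpow : x ^ (t * n + k) = x ^ k := by
      rw [pow_add, show t * n = n * t from mul_comm t n, pow_mul, hx, one_pow, one_mul]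
    rw [hf]
    simp only
    rw [mul_pow, hxpow, show t * n + k = k + t * n from by omega]
    push_cast
    ring
  calc ∑ k ∈ Finset.range n, x ^ k * (psi n a k : ℂ)
      = ∑ r : Fin n, x ^ (r : ℕ) * (psi n a (r : ℕ) : ℂ) :=
        (Fin.sum_univ_eq_sum_range (fun k => x ^ k * (psi n a k : ℂ)) n).symm
    _ = ∑ r : Fin n, ∑' t : ℕ, f (e (r, t)) := by
        refine Finset.sum_congr rfl fun r _ => ?_
        rw [psi, Complex.ofReal_tsum, ← tsum_mul_left]
        refine tsum_congr fun t => ?_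
        rw [he' (r, t), hterm (r : ℕ) t]
    _ = ∑' m, f m := by rw [← h3, ← h2, h1]
    _ = Complex.exp ((a : ℂ) * x) := hexp.symm

theorem statement3 (n : ℕ) (hn : 2 ≤ n) (a : ℝ) (ha : 0 ≤ a) (j : ℕ)
    (hj1 : 1 ≤ j) (hj2 : j ≤ n - 1) :
    phiHat n a (j : ℤ) < phiHat n a 0 ∧
      phi n a (j : ℤ) < phi n a 0 ∧ phi n a 0 = 1 := by
  have hn0 : 0 < n := by omega
  have hjn : j < n := by omega
  have hA := phiHat_eq n hn0 a j
  have hB := phiHat_zero_eq n hn0 a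
  -- strictness: the values of psi are not invariant under the shift
  have hex : ∃ k ∈ Finset.range n, psi n a k ≠ psi n a ((k + j) % n) := by
    by_contra hc
    push_neg at hc
    set x : ℂ := Complex.exp (2 * (Real.pi : ℂ) * Complex.I / n) with hxdef
    have hne : (n : ℂ) ≠ 0 := Nat.cast_ne_zero.2 hn0.ne'
    have h2pi : (2 * (Real.pi : ℂ) * Complex.I) ≠ 0 := by
      simp [Real.pi_ne_zero, Complex.I_ne_zero]
    have hxn : x ^ n = 1 := by
      rw [hxdef, ← Complex.exp_nat_mul]
      rw [show (n : ℂ) * (2 * (Real.pi : ℂ) * Complex.I / n)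
          = 2 * (Real.pi : ℂ) * Complex.I from by field_simp]
      exact Complex.exp_two_pi_mul_I
    have hxj : x ^ j ≠ 1 := by
      intro h
      rw [hxdef, ← Complex.exp_nat_mul, Complex.exp_eq_one_iff] at h
      obtain ⟨m, hm⟩ := h
      have hm2 : (j : ℂ) * (2 * (Real.pi : ℂ) * Complex.I)
          = ((m : ℂ) * n) * (2 * (Real.pi : ℂ) * Complex.I) := by
        calc (j : ℂ) * (2 * (Real.pi : ℂ) * Complex.I)
            = (j : ℂ) * (2 * (Real.pi : ℂ) * Complex.I / n) * n := by field_simp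
          _ = (m : ℂ) * (2 * (Real.pi : ℂ) * Complex.I) * n := by rw [hm]
          _ = ((m : ℂ) * n) * (2 * (Real.pi : ℂ) * Complex.I) := by ring
      have hjm : (j : ℂ) = (m : ℂ) * n := mul_right_cancel₀ h2pi hm2
      have hjm' : (j : ℤ) = m * n := by exact_mod_cast hjm
      have hnz : (0 : ℤ) < (n : ℤ) := by exact_mod_cast hn0
      rcases le_or_gt m 0 with hm0 | hm0
      · have : m * (n : ℤ) ≤ 0 := mul_nonpos_of_nonpos_of_nonneg hm0 hnz.le
        omega
      · have : (n : ℤ) ≤ m * n := le_mul_of_one_le_left hnz.le hm0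
        omega
    have hS : ∑ k ∈ Finset.range n, x ^ k * (psi n a k : ℂ) = Complex.exp (a * x) :=
      sum_pow_mul_psi n hn0 a x hxn
    have hshift : x ^ j * ∑ k ∈ Finset.range n, x ^ k * (psi n a k : ℂ)
        = ∑ k ∈ Finset.range n, x ^ k * (psi n a k : ℂ) := by
      rw [Finset.mul_sum]
      calc ∑ k ∈ Finset.range n, x ^ j * (x ^ k * (psi n a k : ℂ))
          = ∑ k ∈ Finset.range n, x ^ ((k + j) % n) * (psi n a ((k + j) % n) : ℂ) := by
            refine Finset.sum_congr rfl fun k hk => ?_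
            rw [hc k hk]
            have : x ^ j * x ^ k = x ^ ((k + j) % n) := by
              rw [← pow_add, show j + k = (k + j) % n + n * ((k + j) / n) from by
                  have := Nat.mod_add_div (k + j) n; omega,
                pow_add, pow_mul, hxn, one_pow, mul_one]
            rw [← mul_assoc, this]
        _ = ∑ k ∈ Finset.range n, x ^ k * (psi n a k : ℂ) :=
            sum_shift j hjn (fun m => x ^ m * (psi n a m : ℂ))
    rw [hS] at hshift
    exact hxj (mul_right_cancel₀ (Complex.exp_ne_zero _) (by rw [hshift, one_mul]))
  -- the sum of squared differences is positive
  obtain ⟨k0, hk0, hk0ne⟩ := hex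
  have hpos : 0 < ∑ k ∈ Finset.range n, (psi n a k - psi n a ((k + j) % n)) ^ 2 := by
    refine Finset.sum_pos' (fun k _ => sq_nonneg _) ⟨k0, hk0, ?_⟩
    exact pow_two_pos_of_ne_zero (sub_ne_zero.2 hk0ne)
  have hperm : ∑ k ∈ Finset.range n, psi n a ((k + j) % n) * psi n a ((k + j) % n)
      = ∑ k ∈ Finset.range n, psi n a k * psi n a k :=
    sum_shift j hjn (fun m => psi n a m * psi n a m)
  have hexpand : ∑ k ∈ Finset.range n, (psi n a k - psi n a ((k + j) % n)) ^ 2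
      = ∑ k ∈ Finset.range n, psi n a k * psi n a k
        - 2 * ∑ k ∈ Finset.range n, psi n a k * psi n a ((k + j) % n)
        + ∑ k ∈ Finset.range n, psi n a ((k + j) % n) * psi n a ((k + j) % n) := by
    rw [Finset.mul_sum, ← Finset.sum_sub_distrib, ← Finset.sum_add_distrib]
    exact Finset.sum_congr rfl fun k _ => by ring
  have key : phiHat n a (j : ℤ) < phiHat n a 0 := by
    rw [hA, hB]
    rw [hexpand, hperm] at hpos
    linarith
  have hB1 : 0 < phiHat n a 0 := by
    rw [hB]
    refine Finset.sum_pos' (fun k _ => mul_self_nonneg _) ⟨0, Finset.mem_range.2 hn0, ?_⟩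
    have h1 := one_le_psi_zero n hn0 a ha
    nlinarith
  refine ⟨key, ?_, ?_⟩
  · unfold phi
    rw [div_self hB1.ne']
    exact (div_lt_one hB1).2 key
  · unfold phi
    exact div_self hB1.ne'
end

section
/- Let n ≥ 2 be an integer, a ≥ 0 a real number, and j an integer with 0 ≤ j ≤ n−1. Then a^j/j! ≤ ψ_a(j) ≤ a^j/j! + e^a · a^{j+n}/(j+n)!, and the first inequality is strict whenever a > 0. -/
open scoped BigOperators

theorem statement4 (n : ℕ) (hn : 2 ≤ n) (a : ℝ) (ha : 0 ≤ a) (j : ℕ) (hj : j ≤ n - 1) :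
    a ^ j / (Nat.factorial j : ℝ) ≤ psi n a j ∧
      psi n a j ≤ a ^ j / (Nat.factorial j : ℝ) +
        Real.exp a * a ^ (j + n) / (Nat.factorial (j + n) : ℝ) ∧
      (0 < a → a ^ j / (Nat.factorial j : ℝ) < psi n a j) := by
  have hn0 : 0 < n := by omega
  set f : ℕ → ℝ := fun k => a ^ (j + k * n) / (Nat.factorial (j + k * n) : ℝ) with hfdef
  have hinj : Function.Injective (fun k : ℕ => j + k * n) := by
    intro x y h
    simp only [add_right_inj] at h
    exact Nat.eq_of_mul_eq_mul_right hn0 h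
  have hsum : Summable f := (Real.summable_pow_div_factorial a).comp_injective hinj
  have hnonneg : ∀ k, 0 ≤ f k := fun k =>
    div_nonneg (pow_nonneg ha _) (Nat.cast_nonneg _)
  have hpsi : psi n a j = ∑' k, f k := rfl
  have hf0 : f 0 = a ^ j / (Nat.factorial j : ℝ) := by simp [hfdef]
  have hlow : a ^ j / (Nat.factorial j : ℝ) ≤ psi n a j := by
    rw [hpsi, ← hf0]
    exact Summable.le_tsum hsum 0 fun k _ => hnonneg k
  refine ⟨hlow, ?_, ?_⟩
  · -- upper bound
    have hEq : psi n a j = f 0 + ∑' k, f (k + 1) := by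
      rw [hpsi, Summable.tsum_eq_zero_add hsum]
    set c : ℝ := a ^ (j + n) / (Nat.factorial (j + n) : ℝ) with hcdef
    have hc0 : 0 ≤ c := div_nonneg (pow_nonneg ha _) (Nat.cast_nonneg _)
    set g : ℕ → ℝ := fun m => c * (a ^ m / (Nat.factorial m : ℝ)) with hgdef
    have hgsum : Summable g := (Real.summable_pow_div_factorial a).mul_left c
    have hgnonneg : ∀ m, 0 ≤ g m := fun m =>
      mul_nonneg hc0 (div_nonneg (pow_nonneg ha _) (Nat.cast_nonneg _))
    have hinj2 : Function.Injective (fun k : ℕ => k * n) := fun x y h =>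
      Nat.eq_of_mul_eq_mul_right hn0 h
    have hle : ∀ k : ℕ, f (k + 1) ≤ g (k * n) := by
      intro k
      have harith : j + (k + 1) * n = (j + n) + k * n := by ring
      have hfac : ((Nat.factorial (j + n) : ℝ) * (Nat.factorial (k * n) : ℝ))
          ≤ (Nat.factorial (j + (k + 1) * n) : ℝ) := by
        rw [harith]
        exact_mod_cast Nat.le_of_dvd (Nat.factorial_pos _)
          (Nat.factorial_mul_factorial_dvd_factorial_add (j + n) (k * n))
      have hnum : a ^ (j + (k + 1) * n) = a ^ (j + n) * a ^ (k * n) := by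
        rw [harith, pow_add]
      show a ^ (j + (k + 1) * n) / (Nat.factorial (j + (k + 1) * n) : ℝ)
          ≤ c * (a ^ (k * n) / (Nat.factorial (k * n) : ℝ))
      rw [hcdef, hnum, div_mul_div_comm]
      refine div_le_div_of_nonneg_left ?_ ?_ hfac
      · exact mul_nonneg (pow_nonneg ha _) (pow_nonneg ha _)
      · positivity
    have hsum' : Summable (fun k => f (k + 1)) := (summable_nat_add_iff 1).2 hsum
    have htail : (∑' k, f (k + 1)) ≤ ∑' m, g m :=
      Summable.tsum_le_tsum_of_inj (fun k : ℕ => k * n) hinj2 (fun m _ => hgnonneg m) hle hsum' hgsum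
    have hgt : (∑' m, g m) = c * Real.exp a := by
      rw [hgdef, tsum_mul_left]
      congr 1
      rw [Real.exp_eq_exp_ℝ, NormedSpace.exp_eq_tsum_div]
    rw [hEq, hf0]
    have : Real.exp a * a ^ (j + n) / (Nat.factorial (j + n) : ℝ) = c * Real.exp a := by
      rw [hcdef]; ring
    rw [this]
    linarith [htail, hgt.le, hgt.ge]
  · intro hapos
    have h2 : f 0 + f 1 ≤ psi n a j := by
      rw [hpsi]
      have := Summable.sum_le_tsum (Finset.range 2) (fun k _ => hnonneg k) hsum
      simpa [Finset.sum_range_succ] using this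
    have hf1 : 0 < f 1 := by
      apply div_pos (pow_pos hapos _)
      exact_mod_cast Nat.factorial_pos _
    rw [← hf0]
    linarith
end

section
/- Let n ≥ 2 be an integer and let a ≥ 0 be a real number satisfying a(1 + ε_a) ≤ 1. Then for every integer j, φ̂_a(j+1)·φ̂_a(0) + φ̂_a(j−1)·φ̂_a(0) ≥ 2·φ̂_a(j)·φ̂_a(1), where φ̂_a is extended n-periodically to all integers. -/
open scoped BigOperators

namespace S7

noncomputable def p (a : ℝ) (k : ℕ) : ℝ := a ^ k / k.factorial

noncomputable def DD (n : ℕ) (a : ℝ) : ℝ := a ^ n * Real.exp a / n.factorial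

noncomputable def G (n : ℕ) (a : ℝ) (r : ℕ) : ℝ :=
  ∑ k ∈ Finset.range n, psi n a k * psi n a ((k + r) % n)

noncomputable def s (n : ℕ) (a : ℝ) (r : ℕ) : ℝ :=
  ∑ k ∈ Finset.range n, p a k * p a ((k + r) % n)

noncomputable def B (n : ℕ) (a : ℝ) (t : ℕ) : ℝ :=
  ∑ k ∈ Finset.range n, p a k * p a (k + t)

variable {n : ℕ} {a : ℝ}

lemma p_nonneg (ha : 0 ≤ a) (k : ℕ) : 0 ≤ p a k := by
  unfold p; positivity

lemma p_zero : p a 0 = 1 := by simp [p]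

lemma p_succ (k : ℕ) : p a (k + 1) * (k + 1) = a * p a k := by
  unfold p
  rw [Nat.factorial_succ, pow_succ]
  push_cast
  have h1 : ((k:ℝ) + 1) ≠ 0 := by positivity
  have h2 : ((k.factorial : ℝ)) ≠ 0 := by positivity
  field_simp

lemma p_add_le (ha : 0 ≤ a) (x y : ℕ) : p a (x + y) ≤ p a x * p a y := by
  unfold p
  rw [pow_add, div_mul_div_comm]
  apply div_le_div_of_nonneg_left (by positivity) (by positivity)
  exact_mod_cast Nat.le_of_dvd (Nat.factorial_pos _)
    (Nat.factorial_mul_factorial_dvd_factorial_add x y)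

lemma p_le_pow (ha : 0 ≤ a) (k : ℕ) : p a k ≤ a ^ k := by
  unfold p
  rw [div_le_iff₀ (by positivity)]
  nlinarith [pow_nonneg ha k, Nat.one_le_cast (α := ℝ) |>.2 (Nat.one_le_iff_ne_zero.2 (Nat.factorial_ne_zero k))]

lemma DD_nonneg (ha : 0 ≤ a) : 0 ≤ DD n a := by
  unfold DD
  positivity

lemma psi_summable (hn : 1 ≤ n) (j : ℕ) :
    Summable (fun k : ℕ => a ^ (j + k * n) / (Nat.factorial (j + k * n) : ℝ)) := by
  apply (Real.summable_pow_div_factorial a).comp_injective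
  intro x y hxy
  simp only [] at hxy
  have : x * n = y * n := by omega
  exact Nat.eq_of_mul_eq_mul_right hn this

lemma psi_nonneg (ha : 0 ≤ a) (j : ℕ) : 0 ≤ psi n a j := by
  unfold psi
  exact tsum_nonneg (fun k => by positivity)

lemma p_le_psi (ha : 0 ≤ a) (hn : 1 ≤ n) (j : ℕ) : p a j ≤ psi n a j := by
  have h := Summable.le_tsum (psi_summable (a := a) hn j) 0 (fun k _ => by positivity)
  simpa [p, psi] using h

lemma exp_eq_tsum : Real.exp a = ∑' m : ℕ, a ^ m / m.factorial := by
  rw [Real.exp_eq_exp_ℝ, NormedSpace.exp_eq_tsum_div]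

lemma tsum_pow_mul_le_exp (ha : 0 ≤ a) (hn : 1 ≤ n) :
    ∑' k : ℕ, a ^ (k * n) / (Nat.factorial (k * n) : ℝ) ≤ Real.exp a := by
  rw [exp_eq_tsum]
  apply Summable.tsum_le_tsum_of_inj (fun k => k * n)
  · intro x y hxy
    exact Nat.eq_of_mul_eq_mul_right hn hxy
  · intro c _; positivity
  · intro b; exact le_refl _
  · simpa using psi_summable (a := a) hn 0
  · exact Real.summable_pow_div_factorial a

lemma psi_le (ha : 0 ≤ a) (hn : 1 ≤ n) (j : ℕ) :
    psi n a j ≤ p a j * (1 + DD n a) := by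
  unfold psi
  rw [Summable.tsum_eq_zero_add (psi_summable hn j)]
  have h0 : a ^ (j + 0 * n) / (Nat.factorial (j + 0 * n) : ℝ) = p a j := by
    simp [p]
  rw [h0, mul_add, mul_one]
  gcongr
  have hterm : ∀ k : ℕ, a ^ (j + (k+1) * n) / (Nat.factorial (j + (k+1) * n) : ℝ) ≤
      p a j * (a ^ n / n.factorial) * (a ^ (k * n) / (Nat.factorial (k * n) : ℝ)) := by
    intro k
    have hexp : j + (k+1) * n = j + n + k * n := by ring
    rw [hexp]
    have hfac : (Nat.factorial j * Nat.factorial n * Nat.factorial (k * n) : ℕ)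
        ≤ Nat.factorial (j + n + k * n) := by
      calc Nat.factorial j * Nat.factorial n * Nat.factorial (k * n)
          ≤ Nat.factorial (j + n) * Nat.factorial (k * n) := by
            apply Nat.mul_le_mul_right
            exact Nat.le_of_dvd (Nat.factorial_pos _)
              (Nat.factorial_mul_factorial_dvd_factorial_add j n)
        _ ≤ Nat.factorial (j + n + k * n) := Nat.le_of_dvd (Nat.factorial_pos _)
              (Nat.factorial_mul_factorial_dvd_factorial_add (j+n) (k*n))
    unfold p
    rw [div_mul_div_comm, div_mul_div_comm, pow_add, pow_add]
    apply div_le_div_of_nonneg_left (by positivity) (by positivity)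
    exact_mod_cast hfac
  calc (∑' k : ℕ, a ^ (j + (k+1) * n) / (Nat.factorial (j + (k+1) * n) : ℝ))
      ≤ ∑' k : ℕ, p a j * (a ^ n / n.factorial) * (a ^ (k * n) / (Nat.factorial (k * n) : ℝ)) := by
        have hsub : Summable (fun k : ℕ => a ^ (k * n) / (Nat.factorial (k * n) : ℝ)) := by
          simpa using psi_summable (a := a) hn 0
        apply Summable.tsum_le_tsum hterm
        · exact (psi_summable (a := a) hn j).comp_injective
            (add_left_injective 1)
        · exact hsub.mul_left _
      _ ≤ p a j * DD n a := by
        have hsub : Summable (fun k : ℕ => a ^ (k * n) / (Nat.factorial (k * n) : ℝ)) := by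
          simpa using psi_summable (a := a) hn 0
        rw [tsum_mul_left]
        unfold DD
        calc p a j * (a ^ n / ↑n.factorial) * (∑' k : ℕ, a ^ (k*n) / (Nat.factorial (k*n) : ℝ))
            ≤ p a j * (a ^ n / ↑n.factorial) * Real.exp a := by
              apply mul_le_mul_of_nonneg_left (tsum_pow_mul_le_exp ha hn)
              have := p_nonneg (a := a) ha j
              positivity
          _ = p a j * (a ^ n * Real.exp a / ↑n.factorial) := by ring

lemma cond_iff (hn : 0 < n) {k k' r : ℕ} (hk : k < n) (hk' : k' < n) (hr : r < n) :
    (((k':ℤ) - k) % n = r) ↔ k' = (k + r) % n := by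
  have hn' : (0:ℤ) < n := by exact_mod_cast hn
  have h1 : ((k':ℤ) - k) % n = if k ≤ k' then ((k':ℤ) - k) else ((k':ℤ) - k + n) := by
    split_ifs with hc
    · exact Int.emod_eq_of_lt (by omega) (by omega)
    · calc ((k':ℤ) - k) % n = ((k':ℤ) - k + n * 1) % n := (Int.add_mul_emod_self_left ..).symm
        _ = (k':ℤ) - k + n := by rw [mul_one]; exact Int.emod_eq_of_lt (by omega) (by omega)
  have h2 : (k + r) % n = if k + r < n then k + r else k + r - n := by
    split_ifs with hc
    · exact Nat.mod_eq_of_lt hc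
    · rw [Nat.mod_eq_sub_mod (by omega)]
      exact Nat.mod_eq_of_lt (by omega)
  rw [h1, h2]
  split_ifs <;> omega

lemma phiHat_eq_G (hn : 0 < n) (j : ℤ) :
    phiHat n a j = G n a ((j % n).toNat) := by
  have hn' : (0:ℤ) < n := by exact_mod_cast hn
  set r := (j % (n:ℤ)).toNat with hrdef
  have hr0 : 0 ≤ j % (n:ℤ) := Int.emod_nonneg j (by omega)
  have hjr : (j % (n:ℤ)) = (r:ℤ) := (Int.toNat_of_nonneg hr0).symm
  have hrn : r < n := by
    have h := Int.emod_lt_of_pos j hn'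
    omega
  unfold phiHat G
  refine Finset.sum_congr rfl (fun k hk => ?_)
  have hk' := Finset.mem_range.mp hk
  rw [Finset.sum_eq_single ((k + r) % n)]
  · rw [if_pos]
    rw [hjr]
    exact (cond_iff hn hk' (Nat.mod_lt _ hn) hrn).mpr rfl
  · intro b hb hne
    rw [if_neg]
    rw [hjr]
    intro hc
    exact hne ((cond_iff hn hk' (Finset.mem_range.mp hb) hrn).mp hc)
  · intro habs
    exact absurd (Finset.mem_range.mpr (Nat.mod_lt _ hn)) habs

lemma phiHat_neg (j : ℤ) : phiHat n a (-j) = phiHat n a j := by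
  unfold phiHat
  rw [Finset.sum_comm]
  refine Finset.sum_congr rfl (fun k _ => Finset.sum_congr rfl (fun k' _ => ?_))
  have key : ∀ x y : ℤ, x % (n:ℤ) = y % n → (-x) % n = (-y) % n := fun x y h => Int.ModEq.neg h
  have hiff : (((k:ℤ) - k') % n = (-j) % n) ↔ (((k':ℤ) - k) % n = j % n) := by
    constructor
    · intro h
      have h2 := key _ _ h
      rw [neg_sub, neg_neg] at h2
      exact h2
    · intro h
      have h2 := key _ _ h
      rw [neg_sub] at h2
      exact h2
  exact if_congr hiff (mul_comm _ _) rfl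

lemma G_nonneg (ha : 0 ≤ a) (r : ℕ) : 0 ≤ G n a r :=
  Finset.sum_nonneg fun k _ => mul_nonneg (psi_nonneg ha k) (psi_nonneg ha _)

lemma s_nonneg (ha : 0 ≤ a) (r : ℕ) : 0 ≤ s n a r :=
  Finset.sum_nonneg fun k _ => mul_nonneg (p_nonneg ha k) (p_nonneg ha _)

lemma s_le_G (ha : 0 ≤ a) (hn : 1 ≤ n) (r : ℕ) : s n a r ≤ G n a r :=
  Finset.sum_le_sum fun k _ => mul_le_mul (p_le_psi ha hn k) (p_le_psi ha hn _)
    (p_nonneg ha _) (psi_nonneg ha _)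

lemma G_le_s (ha : 0 ≤ a) (hn : 1 ≤ n) (r : ℕ) :
    G n a r ≤ (1 + DD n a) ^ 2 * s n a r := by
  have hD := DD_nonneg (n := n) ha
  calc G n a r ≤ ∑ k ∈ Finset.range n, (p a k * (1 + DD n a)) * (p a ((k + r) % n) * (1 + DD n a)) :=
        Finset.sum_le_sum fun k _ => mul_le_mul (psi_le ha hn k) (psi_le ha hn _)
          (psi_nonneg ha _) (by have := p_nonneg (a := a) ha k; positivity)
    _ = (1 + DD n a) ^ 2 * s n a r := by
        rw [s, Finset.mul_sum]
        exact Finset.sum_congr rfl fun k _ => by ring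

lemma s_split (r : ℕ) (hr : r ≤ n) :
    s n a r = (∑ k ∈ Finset.range (n - r), p a k * p a (k + r))
      + ∑ i ∈ Finset.range r, p a (n - r + i) * p a i := by
  unfold s
  have hsplit : ∑ k ∈ Finset.range n, p a k * p a ((k + r) % n)
      = ∑ k ∈ Finset.range ((n - r) + r), p a k * p a ((k + r) % n) := by
    rw [Nat.sub_add_cancel hr]
  rw [hsplit, Finset.sum_range_add]
  congr 1
  · refine Finset.sum_congr rfl fun k hk => ?_
    have hk' := Finset.mem_range.mp hk
    rw [Nat.mod_eq_of_lt (by omega)]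
  · refine Finset.sum_congr rfl fun i hi => ?_
    have hi' := Finset.mem_range.mp hi
    have h1 : n - r + i + r = i + n := by omega
    rw [h1, Nat.add_mod_right, Nat.mod_eq_of_lt (by omega)]

lemma B_nonneg (ha : 0 ≤ a) (t : ℕ) : 0 ≤ B n a t :=
  Finset.sum_nonneg fun k _ => mul_nonneg (p_nonneg ha k) (p_nonneg ha _)

lemma p_le_B (ha : 0 ≤ a) (hn : 0 < n) (t : ℕ) : p a t ≤ B n a t := by
  have h := Finset.single_le_sum (f := fun k => p a k * p a (k + t))
    (fun k _ => mul_nonneg (p_nonneg ha k) (p_nonneg ha _))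
    (Finset.mem_range.mpr hn)
  simpa [p_zero, B] using h

lemma B_step (ha : 0 ≤ a) (r : ℕ) (hr : 1 ≤ r) :
    (r : ℝ) * B n a r ≤ a * B n a (r - 1) := by
  unfold B
  rw [Finset.mul_sum, Finset.mul_sum]
  refine Finset.sum_le_sum fun k _ => ?_
  have hkr : k + r = (k + (r - 1)) + 1 := by omega
  have hstep := p_succ (a := a) (k + (r - 1))
  have hple : (r : ℝ) * p a (k + r) ≤ a * p a (k + (r - 1)) := by
    rw [hkr]
    calc (r : ℝ) * p a (k + (r - 1) + 1) ≤ ((k + (r-1) + 1 : ℕ) : ℝ) * p a (k + (r - 1) + 1) := by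
          apply mul_le_mul_of_nonneg_right _ (p_nonneg ha _)
          exact_mod_cast by omega
      _ = a * p a (k + (r - 1)) := by rw [mul_comm]; push_cast at hstep ⊢; linarith [hstep]
  calc (r:ℝ) * (p a k * p a (k + r)) = p a k * ((r:ℝ) * p a (k + r)) := by ring
    _ ≤ p a k * (a * p a (k + (r - 1))) := mul_le_mul_of_nonneg_left hple (p_nonneg ha k)
    _ = a * (p a k * p a (k + (r - 1))) := by ring


lemma p_succ_le (ha : 0 ≤ a) (k : ℕ) : p a (k + 1) ≤ a * p a k := by
  have h := p_succ (a := a) k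
  have hk : (1:ℝ) ≤ (k:ℝ) + 1 := by
    have := Nat.cast_nonneg (α := ℝ) k
    linarith
  nlinarith [p_nonneg (a := a) ha (k+1)]

lemma geom_aux {x : ℝ} (hx0 : 0 ≤ x) (hx1 : x < 1) (m : ℕ) :
    (1 - x) * ∑ i ∈ Finset.range m, x ^ i ≤ 1 := by
  have h := geom_sum_mul x m
  nlinarith [pow_nonneg hx0 m]

lemma geom_bound {x : ℝ} (hx0 : 0 ≤ x) (hx : x ≤ 81/400) (m : ℕ) :
    ∑ i ∈ Finset.range m, x ^ i ≤ 400/319 := by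
  have h := geom_aux hx0 (by linarith) m
  have hs : 0 ≤ ∑ i ∈ Finset.range m, x ^ i :=
    Finset.sum_nonneg fun i _ => pow_nonneg hx0 i
  nlinarith

lemma pk_sq_le (ha : 0 ≤ a) (k : ℕ) : p a k * p a k ≤ (a^2) ^ k := by
  have h1 : p a k ≤ a ^ k := p_le_pow ha k
  have h2 : 0 ≤ p a k := p_nonneg ha k
  calc p a k * p a k ≤ a ^ k * a ^ k := mul_le_mul h1 h1 h2 (pow_nonneg ha k)
    _ = (a^2) ^ k := by rw [← pow_add, ← pow_mul, Nat.two_mul]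

lemma s_zero_eq : s n a 0 = ∑ k ∈ Finset.range n, p a k * p a k := by
  unfold s
  refine Finset.sum_congr rfl fun k hk => ?_
  rw [Nat.add_zero, Nat.mod_eq_of_lt (Finset.mem_range.mp hk)]

lemma one_le_s_zero (ha : 0 ≤ a) (hn : 0 < n) : 1 ≤ s n a 0 := by
  rw [s_zero_eq]
  have h := Finset.single_le_sum (f := fun k => p a k * p a k)
    (fun k _ => mul_nonneg (p_nonneg ha k) (p_nonneg ha k)) (Finset.mem_range.mpr hn)
  simpa [p_zero] using h

lemma s_zero_le (ha : 0 ≤ a) (ha45 : a ≤ 45/100) : s n a 0 ≤ 1254/1000 := by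
  rw [s_zero_eq]
  have hx0 : (0:ℝ) ≤ a^2 := sq_nonneg a
  have hx : a^2 ≤ 81/400 := by nlinarith
  calc ∑ k ∈ Finset.range n, p a k * p a k ≤ ∑ k ∈ Finset.range n, (a^2) ^ k :=
        Finset.sum_le_sum fun k _ => pk_sq_le ha k
    _ ≤ 400/319 := geom_bound hx0 hx n
    _ ≤ 1254/1000 := by norm_num

lemma tail_sq_le (ha : 0 ≤ a) (ha45 : a ≤ 45/100) :
    ∑ k ∈ Finset.Ico 2 n, p a k * p a k ≤ 13/1000 := by
  have hx0 : (0:ℝ) ≤ a^2 := sq_nonneg a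
  have hx : a^2 ≤ 81/400 := by nlinarith
  have hterm : ∀ k ∈ Finset.Ico 2 n, p a k * p a k ≤ (a^2) ^ k / 4 := by
    intro k hk
    have hk2 : 2 ≤ k := (Finset.mem_Ico.mp hk).1
    have hfacn : 2 ≤ k.factorial := by
      calc 2 = Nat.factorial 2 := by norm_num [Nat.factorial]
        _ ≤ k.factorial := Nat.factorial_le hk2
    have hfac : (2:ℝ) ≤ (k.factorial : ℝ) := by exact_mod_cast hfacn
    have hp : p a k ≤ a ^ k / 2 := by
      unfold p
      exact div_le_div_of_nonneg_left (pow_nonneg ha k) (by norm_num) hfac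
    have hp0 : 0 ≤ p a k := p_nonneg ha k
    have hak : 0 ≤ a ^ k := pow_nonneg ha k
    calc p a k * p a k ≤ (a^k/2) * (a^k/2) := mul_le_mul hp hp hp0 (by positivity)
      _ = (a^2)^k / 4 := by rw [← pow_mul, Nat.mul_comm, pow_mul]; ring
  calc ∑ k ∈ Finset.Ico 2 n, p a k * p a k ≤ ∑ k ∈ Finset.Ico 2 n, (a^2) ^ k / 4 :=
        Finset.sum_le_sum hterm
    _ = ∑ i ∈ Finset.range (n - 2), (a^2) ^ (2 + i) / 4 := by
        rw [Finset.sum_Ico_eq_sum_range]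
    _ = (a^2)^2 / 4 * ∑ i ∈ Finset.range (n - 2), (a^2) ^ i := by
        rw [Finset.mul_sum]
        exact Finset.sum_congr rfl fun i _ => by rw [pow_add]; ring
    _ ≤ (81/400)^2 / 4 * (400/319) := by
        apply mul_le_mul _ (geom_bound hx0 hx _) _ (by norm_num)
        · apply div_le_div_of_nonneg_right _ (by norm_num)
          exact pow_le_pow_left₀ hx0 hx 2
        · exact Finset.sum_nonneg fun i _ => pow_nonneg hx0 i
    _ ≤ 13/1000 := by norm_num


lemma nat_pow_factorial_le (r : ℕ) (hr : 1 ≤ r) :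
    ∀ m : ℕ, r ^ (m+1) * (r-1).factorial ≤ (r+m).factorial := by
  intro m
  induction m with
  | zero =>
    rw [pow_one, Nat.add_zero]
    rw [Nat.mul_factorial_pred (by omega)]
  | succ m ih =>
    have he : r ^ (m+1+1) * (r-1).factorial = r * (r ^ (m+1) * (r-1).factorial) := by ring
    rw [he]
    calc r * (r ^ (m+1) * (r-1).factorial) ≤ r * (r+m).factorial :=
          Nat.mul_le_mul_left r ih
      _ ≤ (r+m+1) * (r+m).factorial := Nat.mul_le_mul_right _ (by omega)
      _ = (r+(m+1)).factorial := by
          rw [show r + (m+1) = (r+m)+1 by omega, Nat.factorial_succ]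

lemma wrap_key (ha : 0 ≤ a) {r : ℕ} (m : ℕ) (hr : 1 ≤ r) :
    (r:ℝ) * p a (r + m) ≤ a ^ (m+1) * p a (r - 1) := by
  have hstep1 : (r:ℝ) * p a (r + m) ≤ (r:ℝ)^(m+1) * p a (r+m) := by
    apply mul_le_mul_of_nonneg_right _ (p_nonneg ha _)
    have h1 : (1:ℝ) ≤ (r:ℝ) := by exact_mod_cast hr
    calc (r:ℝ) = (r:ℝ)^1 := (pow_one _).symm
      _ ≤ (r:ℝ)^(m+1) := pow_le_pow_right₀ h1 (by omega)
  refine hstep1.trans ?_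
  unfold p
  have hfr : (0:ℝ) < ((r+m).factorial : ℝ) := by exact_mod_cast Nat.factorial_pos _
  have hfr1 : (0:ℝ) < ((r-1).factorial : ℝ) := by exact_mod_cast Nat.factorial_pos _
  have hR : a ^ (m+1) * (a ^ (r-1) / ((r-1).factorial : ℝ)) = a ^ (r+m) / ((r-1).factorial : ℝ) := by
    rw [mul_div_assoc', ← pow_add]
    congr 2
    omega
  rw [hR, ← mul_div_assoc, div_le_div_iff₀ hfr hfr1]
  have hnat : (r:ℝ)^(m+1) * ((r-1).factorial : ℝ) ≤ ((r+m).factorial : ℝ) := by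
    exact_mod_cast nat_pow_factorial_le r hr m
  calc (r:ℝ)^(m+1) * a^(r+m) * ((r-1).factorial : ℝ)
      = a^(r+m) * ((r:ℝ)^(m+1) * ((r-1).factorial : ℝ)) := by ring
    _ ≤ a^(r+m) * ((r+m).factorial : ℝ) :=
        mul_le_mul_of_nonneg_left hnat (pow_nonneg ha _)
    _ = a^(r+m) * ((r+m).factorial : ℝ) := rfl

lemma sum_sq_subset_le (ha : 0 ≤ a) {mm : ℕ} (hm : mm ≤ n) :
    ∑ k ∈ Finset.range mm, p a k * p a k ≤ s n a 0 := by
  rw [s_zero_eq]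
  apply Finset.sum_le_sum_of_subset_of_nonneg (Finset.range_subset_range.mpr hm)
  intro k _ _
  exact mul_nonneg (p_nonneg ha k) (p_nonneg ha k)

lemma r_mul_s_le (ha : 0 ≤ a) {r : ℕ} (hr : 1 ≤ r) (hrn : 2*r ≤ n) :
    (r:ℝ) * s n a r ≤ a * B n a (r-1) * (1 + a^(n-2*r) * s n a 0) := by
  have hrn' : r ≤ n := by omega
  rw [s_split r hrn']
  have hT : (∑ k ∈ Finset.range (n - r), p a k * p a (k + r)) ≤ B n a r := by
    unfold B
    apply Finset.sum_le_sum_of_subset_of_nonneg (Finset.range_subset_range.mpr (by omega))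
    intro k _ _
    exact mul_nonneg (p_nonneg ha k) (p_nonneg ha _)
  have hrB := B_step (n := n) ha r hr
  have hW : (∑ i ∈ Finset.range r, p a (n - r + i) * p a i) ≤ p a (n-r) * s n a 0 := by
    calc ∑ i ∈ Finset.range r, p a (n - r + i) * p a i
        ≤ ∑ i ∈ Finset.range r, p a (n - r) * (p a i * p a i) := by
          apply Finset.sum_le_sum
          intro i _
          have h1 : p a (n - r + i) ≤ p a (n-r) * p a i := p_add_le ha _ _
          nlinarith [p_nonneg (a := a) ha i, p_nonneg (a := a) ha (n-r+i),
            p_nonneg (a:=a) ha (n-r)]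
      _ = p a (n-r) * ∑ i ∈ Finset.range r, p a i * p a i := by rw [Finset.mul_sum]
      _ ≤ p a (n-r) * s n a 0 :=
          mul_le_mul_of_nonneg_left (sum_sq_subset_le ha (by omega)) (p_nonneg ha _)
  have hwk : (r:ℝ) * p a (n - r) ≤ a ^ (n - 2*r + 1) * p a (r-1) := by
    have h := wrap_key (a := a) ha (r := r) (n - 2*r) hr
    rw [show r + (n - 2*r) = n - r by omega] at h
    exact h
  have hs0 : 0 ≤ s n a 0 := s_nonneg ha 0
  have hBr1 : 0 ≤ B n a (r-1) := B_nonneg ha _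
  have hpr1 : p a (r-1) ≤ B n a (r-1) := p_le_B ha (by omega) _
  have hpow : a ^ (n - 2*r + 1) = a * a ^ (n-2*r) := by rw [pow_succ]; ring
  have h1 : (r:ℝ) * (∑ k ∈ Finset.range (n - r), p a k * p a (k + r)) ≤ a * B n a (r-1) :=
    (mul_le_mul_of_nonneg_left hT (Nat.cast_nonneg r)).trans hrB
  have h2 : (r:ℝ) * (∑ i ∈ Finset.range r, p a (n-r+i) * p a i)
      ≤ a * a^(n-2*r) * (B n a (r-1) * s n a 0) := by
    calc (r:ℝ) * (∑ i ∈ Finset.range r, p a (n-r+i) * p a i)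
        ≤ (r:ℝ) * (p a (n-r) * s n a 0) := mul_le_mul_of_nonneg_left hW (Nat.cast_nonneg r)
      _ = ((r:ℝ) * p a (n-r)) * s n a 0 := by ring
      _ ≤ (a ^ (n-2*r+1) * p a (r-1)) * s n a 0 := mul_le_mul_of_nonneg_right hwk hs0
      _ ≤ (a ^ (n-2*r+1) * B n a (r-1)) * s n a 0 := by
          apply mul_le_mul_of_nonneg_right _ hs0
          exact mul_le_mul_of_nonneg_left hpr1 (by positivity)
      _ = a * a^(n-2*r) * (B n a (r-1) * s n a 0) := by rw [hpow]; ring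
  calc (r:ℝ) * ((∑ k ∈ Finset.range (n - r), p a k * p a (k + r))
        + ∑ i ∈ Finset.range r, p a (n-r+i) * p a i)
      = (r:ℝ) * (∑ k ∈ Finset.range (n - r), p a k * p a (k + r))
        + (r:ℝ) * (∑ i ∈ Finset.range r, p a (n-r+i) * p a i) := by ring
    _ ≤ a * B n a (r-1) + a * a^(n-2*r) * (B n a (r-1) * s n a 0) := add_le_add h1 h2
    _ = a * B n a (r-1) * (1 + a^(n-2*r) * s n a 0) := by ring

lemma s_one_le (ha : 0 ≤ a) (ha1 : a ≤ 1) (hn : 3 ≤ n) :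
    s n a 1 ≤ (a + a^2/2) * s n a 0 := by
  rw [s_split 1 (by omega)]
  have hT : (∑ k ∈ Finset.range (n-1), p a k * p a (k+1)) ≤ a * s n a 0 := by
    calc ∑ k ∈ Finset.range (n-1), p a k * p a (k+1)
        ≤ ∑ k ∈ Finset.range (n-1), a * (p a k * p a k) := by
          apply Finset.sum_le_sum
          intro k _
          have h := p_succ_le (a := a) ha k
          nlinarith [p_nonneg (a:=a) ha k]
      _ = a * ∑ k ∈ Finset.range (n-1), p a k * p a k := by rw [Finset.mul_sum]
      _ ≤ a * s n a 0 :=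
          mul_le_mul_of_nonneg_left (sum_sq_subset_le ha (by omega)) ha
  have hW : (∑ i ∈ Finset.range 1, p a (n-1+i) * p a i) ≤ a^2/2 * s n a 0 := by
    rw [Finset.sum_range_one, Nat.add_zero, p_zero, mul_one]
    have h1 : p a (n-1) ≤ a^2/2 := by
      unfold p
      have hpow : a^(n-1) ≤ a^2 := pow_le_pow_of_le_one ha ha1 (by omega)
      have hfac : (2:ℝ) ≤ ((n-1).factorial : ℝ) := by
        have : 2 ≤ (n-1).factorial := by
          calc 2 = Nat.factorial 2 := by norm_num [Nat.factorial]
            _ ≤ (n-1).factorial := Nat.factorial_le (by omega)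
        exact_mod_cast this
      exact div_le_div₀ (by positivity) hpow (by norm_num) hfac
    calc p a (n-1) ≤ a^2/2 := h1
      _ ≤ a^2/2 * s n a 0 :=
          le_mul_of_one_le_right (by positivity) (one_le_s_zero ha (by omega))
  linarith

lemma s_pred_ge (ha : 0 ≤ a) (ha45 : a ≤ 45/100) {r : ℕ} (hr : 1 ≤ r) (hrn : 2*r ≤ n) :
    (987/1000) * B n a (r-1) ≤ s n a (r-1) := by
  have hb : n - (n - (r-1)) = r - 1 := by omega
  have hsplitB : B n a (r-1) = (∑ k ∈ Finset.range (n - (r-1)), p a k * p a (k + (r-1)))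
      + ∑ i ∈ Finset.range (r-1), p a ((n - (r-1)) + i) * p a ((n - (r-1)) + i + (r-1)) := by
    unfold B
    have h0 : ∑ k ∈ Finset.range n, p a k * p a (k + (r-1))
        = ∑ k ∈ Finset.range ((n - (r-1)) + (r-1)), p a k * p a (k + (r-1)) := by
      rw [Nat.sub_add_cancel (by omega)]
    rw [h0, Finset.sum_range_add]
  have hE : (∑ i ∈ Finset.range (r-1), p a ((n - (r-1)) + i) * p a ((n - (r-1)) + i + (r-1)))
      ≤ (13/1000) * p a (r-1) := by
    calc ∑ i ∈ Finset.range (r-1), p a ((n-(r-1))+i) * p a ((n-(r-1))+i+(r-1))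
        ≤ ∑ i ∈ Finset.range (r-1), (p a ((n-(r-1))+i) * p a ((n-(r-1))+i)) * p a (r-1) := by
          apply Finset.sum_le_sum
          intro i _
          have h1 : p a ((n-(r-1))+i+(r-1)) ≤ p a ((n-(r-1))+i) * p a (r-1) := p_add_le ha _ _
          nlinarith [p_nonneg (a:=a) ha ((n-(r-1))+i), p_nonneg (a:=a) ha (r-1)]
      _ = (∑ i ∈ Finset.range (r-1), p a ((n-(r-1))+i) * p a ((n-(r-1))+i)) * p a (r-1) := by
          rw [Finset.sum_mul]
      _ ≤ (13/1000) * p a (r-1) := by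
          apply mul_le_mul_of_nonneg_right _ (p_nonneg ha _)
          have hico : ∑ k ∈ Finset.Ico (n-(r-1)) n, p a k * p a k
              = ∑ i ∈ Finset.range (n - (n-(r-1))), p a ((n-(r-1))+i) * p a ((n-(r-1))+i) := by
            rw [Finset.sum_Ico_eq_sum_range]
          rw [hb] at hico
          rw [← hico]
          calc ∑ k ∈ Finset.Ico (n-(r-1)) n, p a k * p a k
              ≤ ∑ k ∈ Finset.Ico 2 n, p a k * p a k := by
                apply Finset.sum_le_sum_of_subset_of_nonneg
                · exact Finset.Ico_subset_Ico (by omega) le_rfl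
                · intro k _ _
                  exact mul_nonneg (p_nonneg ha k) (p_nonneg ha k)
            _ ≤ 13/1000 := tail_sq_le ha ha45
  have hsT : (∑ k ∈ Finset.range (n-(r-1)), p a k * p a (k + (r-1))) ≤ s n a (r-1) := by
    rw [s_split (r-1) (by omega)]
    have h0 : 0 ≤ ∑ i ∈ Finset.range (r-1), p a (n-(r-1)+i) * p a i :=
      Finset.sum_nonneg fun i _ => mul_nonneg (p_nonneg ha _) (p_nonneg ha _)
    linarith
  have hpB : p a (r-1) ≤ B n a (r-1) := p_le_B ha (by omega) _
  linarith


set_option maxHeartbeats 2000000 in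
lemma claimB (hn3 : 3 ≤ n) {r : ℕ} (hr : 1 ≤ r) (hrn : 2*r ≤ n) (ha : 0 ≤ a)
    (ha45 : a ≤ 45/100) (ht : a * (1 + DD n a)^2 ≤ 494/1000)
    (hcase : n - 2*r = 0 → 2 ≤ r) :
    2 * G n a r * G n a 1 ≤ G n a (r-1) * G n a 0 := by
  have hD := DD_nonneg (n := n) (a := a) ha
  set P := (1 + DD n a)^2 with hPdef
  have hP1 : 1 ≤ P := by nlinarith
  have hP0 : (0:ℝ) ≤ P := by linarith
  have hn1 : 1 ≤ n := by omega
  have hsr := s_nonneg (n := n) ha r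
  have hs1 := s_nonneg (n := n) ha 1
  have hs0' := s_nonneg (n := n) ha 0
  have hsrm1 := s_nonneg (n := n) ha (r-1)
  set m := n - 2*r with hmdef
  set S0 := s n a 0 with hS0def
  set X := B n a (r-1) with hXdef
  have hX0 : 0 ≤ X := B_nonneg ha _
  have h1 := r_mul_s_le (n := n) ha hr hrn
  have h2 := s_one_le (n := n) ha (by linarith) hn3
  have h3 := s_pred_ge (n := n) ha ha45 hr hrn
  have hS0u : S0 ≤ 1254/1000 := s_zero_le ha ha45
  have hS0l : 1 ≤ S0 := one_le_s_zero ha (by omega)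
  have hrpos : (0:ℝ) < (r:ℝ) := by exact_mod_cast hr
  have hr1 : (1:ℝ) ≤ (r:ℝ) := by exact_mod_cast hr
  have hu : a * P ≤ 494/1000 := ht
  have hu0 : 0 ≤ a * P := mul_nonneg ha hP0
  have hu2 : (a*P)^2 ≤ (494/1000)^2 := by nlinarith
  have haP2 : 0 ≤ (a*P)^2 := sq_nonneg _
  -- bound on c := a^m * S0
  have hc0 : 0 ≤ a^m * S0 := mul_nonneg (pow_nonneg ha m) (by linarith)
  have hcbound : (1 + a^m * S0) * (1 + a/2) ≤ (if m = 0 then (2254:ℝ)/1000 else 15643/10000) * (49/40) := by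
    have ha2 : 1 + a/2 ≤ 49/40 := by linarith
    have hfirst : 1 + a^m * S0 ≤ (if m = 0 then (2254:ℝ)/1000 else 15643/10000) := by
      split_ifs with hm0
      · rw [hm0, pow_zero, one_mul]; linarith
      · have ham : a^m ≤ a := by
          calc a^m ≤ a^1 := pow_le_pow_of_le_one ha (by linarith) (by omega)
            _ = a := pow_one a
        have : a^m * S0 ≤ (45/100) * (1254/1000) := by
          apply mul_le_mul (by linarith) hS0u (by linarith) (by norm_num)
        linarith
    apply mul_le_mul hfirst ha2 (by linarith) ?_
    split_ifs <;> norm_num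
  -- main numeric bound
  have hnum : 2 * P^2 * (a * (1 + a^m * S0)) * (a + a^2/2) ≤ (987/1000) * r := by
    have hkey : 2 * P^2 * (a * (1 + a^m * S0)) * (a + a^2/2)
        = 2 * (a*P)^2 * ((1 + a^m * S0) * (1 + a/2)) := by ring
    rw [hkey]
    have hstep : 2 * (a*P)^2 * ((1 + a^m * S0) * (1 + a/2))
        ≤ 2 * (494/1000)^2 * ((if m = 0 then (2254:ℝ)/1000 else 15643/10000) * (49/40)) := by
      apply mul_le_mul (by nlinarith) hcbound ?_ (by norm_num)
      have : (0:ℝ) ≤ (1 + a^m * S0) := by linarith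
      nlinarith
    refine hstep.trans ?_
    split_ifs with hm0
    · have hr2 : 2 ≤ r := hcase hm0
      have : (2:ℝ) ≤ (r:ℝ) := by exact_mod_cast hr2
      nlinarith
    · nlinarith
  -- the chain
  have hchain : (r:ℝ) * (2 * P^2 * (s n a r * s n a 1)) ≤ (r:ℝ) * (s n a (r-1) * S0) := by
    calc (r:ℝ) * (2 * P^2 * (s n a r * s n a 1))
        = (2 * P^2 * s n a 1) * ((r:ℝ) * s n a r) := by ring
      _ ≤ (2 * P^2 * s n a 1) * (a * X * (1 + a^m * S0)) := by
          apply mul_le_mul_of_nonneg_left h1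
          exact mul_nonneg (by positivity) hs1
      _ = (2 * P^2 * (a * (1 + a^m * S0))) * (X * s n a 1) := by ring
      _ ≤ (2 * P^2 * (a * (1 + a^m * S0))) * (X * ((a + a^2/2) * S0)) := by
          apply mul_le_mul_of_nonneg_left (mul_le_mul_of_nonneg_left h2 hX0)
          apply mul_nonneg (by positivity)
          apply mul_nonneg ha (by linarith)
      _ = (2 * P^2 * (a * (1 + a^m * S0)) * (a + a^2/2)) * (X * S0) := by ring
      _ ≤ ((987/1000) * r) * (X * S0) := by
          apply mul_le_mul_of_nonneg_right hnum
          exact mul_nonneg hX0 (by linarith)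
      _ = (r:ℝ) * (((987/1000) * X) * S0) := by ring
      _ ≤ (r:ℝ) * (s n a (r-1) * S0) := by
          apply mul_le_mul_of_nonneg_left _ (le_of_lt hrpos)
          exact mul_le_mul_of_nonneg_right h3 (by linarith)
  have core : 2 * P^2 * (s n a r * s n a 1) ≤ s n a (r-1) * S0 :=
    le_of_mul_le_mul_left hchain hrpos
  -- G level
  have hGr : G n a r ≤ P * s n a r := G_le_s ha hn1 r
  have hG1 : G n a 1 ≤ P * s n a 1 := G_le_s ha hn1 1
  have hsr1G : s n a (r-1) ≤ G n a (r-1) := s_le_G ha hn1 _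
  have hs0G : S0 ≤ G n a 0 := s_le_G ha hn1 0
  have hGr0 : 0 ≤ G n a r := G_nonneg ha r
  have hG10 : 0 ≤ G n a 1 := G_nonneg ha 1
  calc 2 * G n a r * G n a 1 ≤ 2 * (P * s n a r) * (P * s n a 1) := by
        apply mul_le_mul _ hG1 hG10 _
        · exact mul_le_mul_of_nonneg_left hGr (by norm_num)
        · apply mul_nonneg (by norm_num)
          exact mul_nonneg hP0 hsr
    _ = 2 * P^2 * (s n a r * s n a 1) := by ring
    _ ≤ s n a (r-1) * S0 := core
    _ ≤ G n a (r-1) * G n a 0 := by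
        apply mul_le_mul hsr1G hs0G (by linarith) (G_nonneg ha _)


lemma G_two_le (ha : 0 ≤ a) : G 2 a 1 ≤ G 2 a 0 := by
  unfold G
  rw [Finset.sum_range_succ, Finset.sum_range_succ, Finset.sum_range_zero,
      Finset.sum_range_succ, Finset.sum_range_succ, Finset.sum_range_zero]
  norm_num
  nlinarith [sq_nonneg (psi 2 a 0 - psi 2 a 1), psi_nonneg (n := 2) ha 0,
    psi_nonneg (n := 2) ha 1]

lemma a_le_45 (hn : 2 ≤ n) (ha : 0 ≤ a) (h : a * (1 + eps n a) ≤ 1) : a ≤ 45/100 := by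
  by_contra hcon
  push_neg at hcon
  have hexp : 1 + a ≤ Real.exp a := by linarith [Real.add_one_le_exp a]
  have hD : 0 ≤ DD n a := DD_nonneg ha
  have he : 1 + eps n a = (1 + 2*a*Real.exp a) * (1 + DD n a)^2 := by
    unfold eps DD
    ring
  have ha0 : (0:ℝ) < a := by linarith
  have h1 : (1 + 2*a*(1+a)) ≤ (1 + 2*a*Real.exp a) := by nlinarith
  have h2 : (1:ℝ) ≤ (1 + DD n a)^2 := by nlinarith
  have hpos : (0:ℝ) ≤ 1 + 2*a*Real.exp a := by nlinarith
  have k1 : a * (1+2*a*(1+a)) ≤ a * ((1+2*a*Real.exp a) * (1 + DD n a)^2) := by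
    apply mul_le_mul_of_nonneg_left _ (le_of_lt ha0)
    calc (1+2*a*(1+a)) ≤ (1+2*a*Real.exp a) := h1
      _ ≤ (1+2*a*Real.exp a) * (1 + DD n a)^2 := le_mul_of_one_le_right hpos h2
  rw [he] at h
  have hcube : (1:ℝ) < a * (1+2*a*(1+a)) := by nlinarith [mul_pos ha0 ha0, mul_pos (mul_pos ha0 ha0) ha0]
  linarith

lemma aP_le (hn : 2 ≤ n) (ha : 0 ≤ a) (h : a * (1 + eps n a) ≤ 1) :
    a * (1 + DD n a)^2 ≤ 494/1000 := by
  have ha45 := a_le_45 hn ha h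
  have hD : 0 ≤ DD n a := DD_nonneg ha
  have he : 1 + eps n a = (1 + 2*a*Real.exp a) * (1 + DD n a)^2 := by
    unfold eps DD
    ring
  rcases le_or_gt a (39/100) with hc | hc
  · have h3 : (0:ℝ) < Real.exp a := Real.exp_pos a
    have hexp_le : Real.exp a * (1 - a) ≤ 1 := by
      have h1 : 1 - a ≤ Real.exp (-a) := by linarith [Real.add_one_le_exp (-a)]
      have h2 : Real.exp (-a) * Real.exp a = 1 := by
        rw [← Real.exp_add]
        norm_num
      nlinarith
    have hexp : Real.exp a ≤ 100/61 := by nlinarith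
    have hDle : DD n a ≤ 1247/10000 := by
      unfold DD
      have hpow : a^n ≤ a^2 := pow_le_pow_of_le_one ha (by linarith) hn
      have hfacn : 2 ≤ n.factorial := by
        calc 2 = Nat.factorial 2 := by norm_num [Nat.factorial]
          _ ≤ n.factorial := Nat.factorial_le hn
      have hfac : (2:ℝ) ≤ (n.factorial : ℝ) := by exact_mod_cast hfacn
      have hstep : a^n * Real.exp a / (n.factorial : ℝ) ≤ a^2 * (100/61) / 2 := by
        apply div_le_div₀ (by positivity) _ (by norm_num) hfac
        exact mul_le_mul hpow hexp (le_of_lt h3) (by positivity)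
      refine hstep.trans ?_
      nlinarith
    nlinarith [sq_nonneg (DD n a)]
  · rw [he] at h
    have hexp : 1 + a ≤ Real.exp a := by linarith [Real.add_one_le_exp a]
    have h1 : (10421/5000 : ℝ) ≤ 1 + 2*a*Real.exp a := by nlinarith
    have h2 : (0:ℝ) ≤ a * (1 + DD n a)^2 := by positivity
    nlinarith

lemma emod_zero_of_eq (hn : 0 < n) (y : ℤ) (hy : y % (n:ℤ) = 0) (x e c : ℤ)
    (hx : x = e*y + n*c) : x % (n:ℤ) = 0 := by
  have hd : (n:ℤ) ∣ y := Int.dvd_of_emod_eq_zero hy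
  apply Int.emod_eq_zero_of_dvd
  rw [hx]
  exact dvd_add (Dvd.dvd.mul_left hd e) (Dvd.dvd.mul_right dvd_rfl c)

lemma emod_toNat_eq (hn : 0 < n) (x : ℤ) (v : ℕ) (hv : v < n) (h : (x - v) % (n:ℤ) = 0) :
    (x % (n:ℤ)).toNat = v := by
  have hn' : (0:ℤ) < n := by exact_mod_cast hn
  have hd : (n:ℤ) ∣ (x - v) := Int.dvd_of_emod_eq_zero h
  have hd2 : (n:ℤ) ∣ ((v:ℤ) - x) := by
    have := dvd_neg.mpr hd
    rwa [neg_sub] at this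
  have hx : x ≡ (v:ℤ) [ZMOD (n:ℤ)] := Int.modEq_iff_dvd.mpr hd2
  have hmod : x % (n:ℤ) = (v:ℤ) % n := hx
  rw [hmod, Int.emod_eq_of_lt (by positivity) (by exact_mod_cast hv)]
  exact Int.toNat_natCast v

lemma phiHat_eq_G' (hn : 0 < n) (x : ℤ) (v : ℕ) (hv : v < n)
    (h : (x - v) % (n:ℤ) = 0) : phiHat n a x = G n a v := by
  rw [phiHat_eq_G hn x, emod_toNat_eq hn x v hv h]

end S7

theorem statement7 (n : ℕ) (hn : 2 ≤ n) (a : ℝ) (ha : 0 ≤ a)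
    (h : a * (1 + eps n a) ≤ 1) (j : ℤ) :
    2 * phiHat n a j * phiHat n a 1 ≤
      phiHat n a (j + 1) * phiHat n a 0 + phiHat n a (j - 1) * phiHat n a 0 := by
  have hn0 : 0 < n := by omega
  have hn' : (0:ℤ) < n := by exact_mod_cast hn0
  have ha45 := S7.a_le_45 hn ha h
  have ht := S7.aP_le hn ha h
  set r := (j % (n:ℤ)).toNat with hrdef
  have hr0 : 0 ≤ j % (n:ℤ) := Int.emod_nonneg j (by omega)
  have hjr : j % (n:ℤ) = (r:ℤ) := (Int.toNat_of_nonneg hr0).symm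
  have hrn : r < n := by
    have := Int.emod_lt_of_pos j hn'
    omega
  have hrr : (r:ℤ) % n = r := Int.emod_eq_of_lt (by positivity) (by exact_mod_cast hrn)
  have hbase : (j - (r:ℤ)) % n = 0 := by
    rw [Int.sub_emod, hjr, hrr, sub_self, Int.zero_emod]
  have hGj : phiHat n a j = S7.G n a r := by
    apply S7.phiHat_eq_G' hn0 j r hrn
    apply S7.emod_zero_of_eq hn0 _ hbase _ 1 0
    ring
  have hG1 : phiHat n a 1 = S7.G n a 1 := by
    apply S7.phiHat_eq_G' hn0 1 1 (by omega)
    apply S7.emod_zero_of_eq hn0 _ hbase _ 0 0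
    push_cast
    ring
  have hG0 : phiHat n a 0 = S7.G n a 0 := by
    apply S7.phiHat_eq_G' hn0 0 0 (by omega)
    apply S7.emod_zero_of_eq hn0 _ hbase _ 0 0
    push_cast
    ring
  have hphi_nonneg : ∀ x : ℤ, 0 ≤ phiHat n a x := fun x => by
    rw [S7.phiHat_eq_G hn0 x]
    exact S7.G_nonneg ha _
  rcases Nat.eq_zero_or_pos r with hr0' | hr1
  · -- r = 0 : equality case
    have ejp : phiHat n a (j+1) = S7.G n a 1 := by
      apply S7.phiHat_eq_G' hn0 _ 1 (by omega)
      apply S7.emod_zero_of_eq hn0 _ hbase _ 1 0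
      omega
    have ejm : phiHat n a (j-1) = S7.G n a (n-1) := by
      apply S7.phiHat_eq_G' hn0 _ (n-1) (by omega)
      apply S7.emod_zero_of_eq hn0 _ hbase _ 1 (-1)
      omega
    have hGn1 : S7.G n a (n-1) = S7.G n a 1 := by
      have h1 : phiHat n a (-1) = S7.G n a (n-1) := by
        apply S7.phiHat_eq_G' hn0 _ (n-1) (by omega)
        apply S7.emod_zero_of_eq hn0 _ hbase _ 0 (-1)
        omega
      have h2 : phiHat n a (-1) = phiHat n a 1 := S7.phiHat_neg 1
      rw [← h1, h2, hG1]
    rw [hGj, hr0', hG1, hG0, ejp, ejm, hGn1]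
    apply le_of_eq
    ring
  · rcases le_or_gt (2*r) n with hle | hgt
    · by_cases hsp : n = 2
      · -- n = 2, r = 1
        subst hsp
        have hr1' : r = 1 := by omega
        have ejp : phiHat 2 a (j+1) = S7.G 2 a 0 := by
          apply S7.phiHat_eq_G' hn0 _ 0 (by omega)
          apply S7.emod_zero_of_eq hn0 _ hbase _ 1 1
          omega
        have ejm : phiHat 2 a (j-1) = S7.G 2 a 0 := by
          apply S7.phiHat_eq_G' hn0 _ 0 (by omega)
          apply S7.emod_zero_of_eq hn0 _ hbase _ 1 0
          omega
        rw [hGj, hr1', hG1, hG0, ejp, ejm]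
        have h12 := S7.G_two_le (a := a) ha
        have h10 := S7.G_nonneg (n := 2) (a := a) ha 1
        nlinarith
      · have hn3 : 3 ≤ n := by omega
        have hcase : n - 2*r = 0 → 2 ≤ r := by
          intro h0
          omega
        have hcb := S7.claimB hn3 hr1 hle ha ha45 ht hcase
        have ejm : phiHat n a (j-1) = S7.G n a (r-1) := by
          apply S7.phiHat_eq_G' hn0 _ (r-1) (by omega)
          apply S7.emod_zero_of_eq hn0 _ hbase _ 1 0
          omega
        rw [hGj, hG1, hG0, ejm]
        have hnn : 0 ≤ phiHat n a (j+1) * S7.G n a 0 :=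
          mul_nonneg (hphi_nonneg (j+1)) (S7.G_nonneg ha 0)
        linarith
    · -- symmetric case
      have hr' : 1 ≤ n - r := by omega
      have hle' : 2*(n-r) ≤ n := by omega
      have hn3 : 3 ≤ n := by omega
      have hcase : n - 2*(n-r) = 0 → 2 ≤ n - r := by
        intro h0
        omega
      have hcb := S7.claimB hn3 hr' hle' ha ha45 ht hcase
      have ej : phiHat n a j = S7.G n a (n-r) := by
        rw [← S7.phiHat_neg j]
        apply S7.phiHat_eq_G' hn0 _ (n-r) (by omega)
        apply S7.emod_zero_of_eq hn0 _ hbase _ (-1) (-1)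
        omega
      have ejp : phiHat n a (j+1) = S7.G n a (n-r-1) := by
        rw [← S7.phiHat_neg (j+1)]
        apply S7.phiHat_eq_G' hn0 _ (n-r-1) (by omega)
        apply S7.emod_zero_of_eq hn0 _ hbase _ (-1) (-1)
        omega
      have hGsub : n - r - 1 = (n - r) - 1 := rfl
      rw [ej, hG1, hG0, ejp]
      have hnn : 0 ≤ phiHat n a (j-1) * S7.G n a 0 :=
        mul_nonneg (hphi_nonneg (j-1)) (S7.G_nonneg ha 0)
      linarith [hcb]
end

section
/- Let n ≥ 2 be an integer, β ≥ 0 and κ > 0 real numbers (so that φ̂_κ(j) > 0 for every j). Then α(β,κ) = 1 + [∑_{j=1}^{n−1} φ̂_β(j)·φ̂_κ(j)^3·(φ̂_κ(j+1)·φ̂_κ(0) + φ̂_κ(j−1)·φ̂_κ(0) − 2·φ̂_κ(j)·φ̂_κ(1))] / (2·∑_{j=0}^{n−1} φ̂_β(j)·φ̂_κ(j)^4·φ̂_κ(1)), where all indices of φ̂ are taken modulo n. -/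
open scoped BigOperators

lemma psi_pos (n : ℕ) (hn : 0 < n) (a : ℝ) (ha : 0 < a) (j : ℕ) : 0 < psi n a j := by
  refine Summable.tsum_pos (psi_summable n hn a j) (fun k => div_nonneg (pow_nonneg ha.le _) (by positivity)) 0 ?_
  positivity

lemma psi_zero_pos (n : ℕ) (hn : 0 < n) (a : ℝ) (ha : 0 ≤ a) : 0 < psi n a 0 := by
  have h1 : (1:ℝ) ≤ psi n a 0 := by
    unfold psi
    simpa using Summable.le_tsum (psi_summable n hn a 0) 0
      (fun k _ => div_nonneg (pow_nonneg ha _) (by positivity))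
  linarith

lemma phiHat_nonneg (n : ℕ) (a : ℝ) (ha : 0 ≤ a) (j : ℤ) : 0 ≤ phiHat n a j := by
  refine Finset.sum_nonneg fun k _ => Finset.sum_nonneg fun k' _ => ?_
  split
  · exact mul_nonneg (psi_nonneg n a ha k) (psi_nonneg n a ha k')
  · exact le_refl 0

lemma phiHat_zero_pos (n : ℕ) (hn : 0 < n) (a : ℝ) (ha : 0 ≤ a) : 0 < phiHat n a 0 := by
  unfold phiHat
  refine Finset.sum_pos' (fun k _ => Finset.sum_nonneg fun k' _ => ?_) ⟨0, Finset.mem_range.2 hn, ?_⟩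
  · split
    · exact mul_nonneg (psi_nonneg n a ha k) (psi_nonneg n a ha k')
    · exact le_refl 0
  · refine Finset.sum_pos' (fun k' _ => ?_) ⟨0, Finset.mem_range.2 hn, ?_⟩
    · split
      · exact mul_nonneg (psi_nonneg n a ha 0) (psi_nonneg n a ha k')
      · exact le_refl 0
    · simp only [Nat.cast_zero, sub_zero, Int.zero_emod, if_true]
      have := psi_zero_pos n hn a ha
      positivity

lemma phiHat_pos (n : ℕ) (hn : 0 < n) (a : ℝ) (ha : 0 < a) (j : ℤ) : 0 < phiHat n a j := by
  have hnz : (n:ℤ) ≠ 0 := by exact_mod_cast hn.ne'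
  have hjm : 0 ≤ j % (n:ℤ) := Int.emod_nonneg j hnz
  have hjlt : j % (n:ℤ) < n := Int.emod_lt_of_pos j (by exact_mod_cast hn)
  set m : ℕ := (j % (n:ℤ)).toNat with hm
  have hmcast : (m : ℤ) = j % (n:ℤ) := Int.toNat_of_nonneg hjm
  have hmlt : m < n := by omega
  unfold phiHat
  refine Finset.sum_pos' (fun k _ => Finset.sum_nonneg fun k' _ => ?_) ⟨0, Finset.mem_range.2 hn, ?_⟩
  · split
    · exact mul_nonneg (psi_nonneg n a ha.le k) (psi_nonneg n a ha.le k')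
    · exact le_refl 0
  · refine Finset.sum_pos' (fun k' _ => ?_) ⟨m, Finset.mem_range.2 hmlt, ?_⟩
    · split
      · exact mul_nonneg (psi_nonneg n a ha.le 0) (psi_nonneg n a ha.le k')
      · exact le_refl 0
    · rw [if_pos]
      · exact mul_pos (psi_pos n hn a ha 0) (psi_pos n hn a ha m)
      · rw [Nat.cast_zero, sub_zero, hmcast, Int.emod_emod_of_dvd j dvd_rfl]

lemma phiHat_congr (n : ℕ) (a : ℝ) {j j' : ℤ} (h : j % (n:ℤ) = j' % (n:ℤ)) :
    phiHat n a j = phiHat n a j' := by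
  unfold phiHat
  simp only [h]

lemma phiHat_add_n (n : ℕ) (a : ℝ) (j : ℤ) : phiHat n a (j + n) = phiHat n a j :=
  phiHat_congr n a (by simp [Int.add_mul_emod_self_left, Int.add_emod])

lemma emod_eq_emod (n x y : ℤ) : x % n = y % n ↔ n ∣ x - y := by
  rw [Int.emod_eq_emod_iff_emod_sub_eq_zero, ← Int.dvd_iff_emod_eq_zero]

lemma phiHat_neg (n : ℕ) (a : ℝ) (j : ℤ) : phiHat n a (-j) = phiHat n a j := by
  unfold phiHat
  rw [Finset.sum_comm]
  refine Finset.sum_congr rfl fun b _ => Finset.sum_congr rfl fun c _ => ?_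
  have hc : ((((b:ℤ)) - (c:ℤ)) % (n:ℤ) = (-j) % (n:ℤ)) =
      ((((c:ℤ)) - (b:ℤ)) % (n:ℤ) = j % (n:ℤ)) := by
    rw [eq_iff_iff, emod_eq_emod, emod_eq_emod,
      show (b:ℤ) - c - -j = -((c:ℤ) - b - j) by ring, dvd_neg]
  rw [show psi n a c * psi n a b = psi n a b * psi n a c from mul_comm _ _]
  exact if_congr (iff_of_eq hc) rfl rfl

lemma phiHat_add_n' (n : ℕ) (a : ℝ) (j : ℤ) : phiHat n a (j + n) = phiHat n a j :=
  phiHat_congr n a (by rw [show j + (n:ℤ) = j + (n:ℤ) * 1 by ring, Int.add_mul_emod_self_left])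

lemma phiHat_sub (n : ℕ) (a : ℝ) (j : ℤ) : phiHat n a ((n:ℤ) - j) = phiHat n a j := by
  rw [show (n:ℤ) - j = -j + n by ring, phiHat_add_n', phiHat_neg]

lemma refl_sum (n : ℕ) (β κ : ℝ) :
    ∑ j ∈ Finset.Ico 1 n, phiHat n β (j:ℤ) * phiHat n κ (j:ℤ) ^ 3 * phiHat n κ ((j:ℤ)+1)
      = ∑ j ∈ Finset.Ico 1 n, phiHat n β (j:ℤ) * phiHat n κ (j:ℤ) ^ 3 * phiHat n κ ((j:ℤ)-1) := by
  refine Finset.sum_nbij' (i := fun j => n - j) (j := fun j => n - j) ?_ ?_ ?_ ?_ ?_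
  · intro a ha; simp only [Finset.mem_Ico] at ha ⊢; omega
  · intro a ha; simp only [Finset.mem_Ico] at ha ⊢; omega
  · intro a ha; simp only [Finset.mem_Ico] at ha; show n - (n - a) = a; omega
  · intro a ha; simp only [Finset.mem_Ico] at ha; show n - (n - a) = a; omega
  · intro a ha
    rw [Finset.mem_Ico] at ha
    have h1 : ((n - a : ℕ) : ℤ) = (n:ℤ) - a := by omega
    rw [h1, phiHat_sub, phiHat_sub, show (n:ℤ) - a - 1 = (n:ℤ) - ((a:ℤ)+1) by ring,
      phiHat_sub]

lemma final_alg (P0 Q0 Q1 A' B' : ℝ) (hP0 : P0 ≠ 0) (hQ0 : Q0 ≠ 0) (hQ1 : Q1 ≠ 0)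
    (hB : P0 * Q0 ^ 4 + B' ≠ 0) :
    (P0 * Q0 ^ 3 * Q1)⁻¹ * (P0 * Q0 ^ 3 * Q1 + A') /
        ((P0 * Q0 ^ 4)⁻¹ * (P0 * Q0 ^ 4 + B'))
      = 1 + (2 * (Q0 * A' - Q1 * B')) / (2 * ((P0 * Q0 ^ 4 + B') * Q1)) := by
  field_simp
  ring

theorem statement8 (n : ℕ) (hn : 2 ≤ n) (β κ : ℝ) (hβ : 0 ≤ β) (hκ : 0 < κ) :
    alpha n β κ = 1 +
      (∑ j ∈ Finset.Ico 1 n,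
          phiHat n β (j : ℤ) * (phiHat n κ (j : ℤ)) ^ 3 *
            (phiHat n κ ((j : ℤ) + 1) * phiHat n κ 0 +
              phiHat n κ ((j : ℤ) - 1) * phiHat n κ 0 -
              2 * phiHat n κ (j : ℤ) * phiHat n κ 1)) /
        (2 * ∑ j ∈ Finset.range n,
            phiHat n β (j : ℤ) * (phiHat n κ (j : ℤ)) ^ 4 * phiHat n κ 1) := by
  have hn0 : 0 < n := by omega
  have hQ : ∀ j : ℤ, 0 < phiHat n κ j := phiHat_pos n hn0 κ hκ
  have hP0 : 0 < phiHat n β 0 := phiHat_zero_pos n hn0 β hβ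
  have hPn : ∀ j : ℤ, 0 ≤ phiHat n β j := phiHat_nonneg n β hβ
  have hnum : (∑ j ∈ Finset.range n,
      phi n β (j:ℤ) * (phi n κ (j:ℤ)) ^ 4 *
        (phi n κ ((j:ℤ)+1) / (phi n κ (j:ℤ) * phi n κ 1)))
      = (phiHat n β 0 * phiHat n κ 0 ^ 3 * phiHat n κ 1)⁻¹ *
        ∑ j ∈ Finset.range n, phiHat n β (j:ℤ) * phiHat n κ (j:ℤ) ^ 3 * phiHat n κ ((j:ℤ)+1) := by
    rw [Finset.mul_sum]
    refine Finset.sum_congr rfl fun j _ => ?_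
    unfold phi
    have h1 := (hQ (j:ℤ)).ne'
    have h2 := (hQ 0).ne'
    have h3 := (hQ 1).ne'
    have h4 := (hQ ((j:ℤ)+1)).ne'
    have h5 := hP0.ne'
    field_simp
  have hden : (∑ j ∈ Finset.range n, phi n β (j:ℤ) * (phi n κ (j:ℤ)) ^ 4)
      = (phiHat n β 0 * phiHat n κ 0 ^ 4)⁻¹ *
        ∑ j ∈ Finset.range n, phiHat n β (j:ℤ) * phiHat n κ (j:ℤ) ^ 4 := by
    rw [Finset.mul_sum]
    refine Finset.sum_congr rfl fun j _ => ?_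
    unfold phi
    have h2 := (hQ 0).ne'
    have h5 := hP0.ne'
    field_simp
  have hAsplit : (∑ j ∈ Finset.range n, phiHat n β (j:ℤ) * phiHat n κ (j:ℤ) ^ 3 * phiHat n κ ((j:ℤ)+1))
      = phiHat n β 0 * phiHat n κ 0 ^ 3 * phiHat n κ 1 +
        ∑ j ∈ Finset.Ico 1 n, phiHat n β (j:ℤ) * phiHat n κ (j:ℤ) ^ 3 * phiHat n κ ((j:ℤ)+1) := by
    rw [Finset.range_eq_Ico, Finset.sum_eq_sum_Ico_succ_bot hn0]
    norm_num
  have hBsplit : (∑ j ∈ Finset.range n, phiHat n β (j:ℤ) * phiHat n κ (j:ℤ) ^ 4)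
      = phiHat n β 0 * phiHat n κ 0 ^ 4 +
        ∑ j ∈ Finset.Ico 1 n, phiHat n β (j:ℤ) * phiHat n κ (j:ℤ) ^ 4 := by
    rw [Finset.range_eq_Ico, Finset.sum_eq_sum_Ico_succ_bot hn0]
    norm_num
  have hCnum : (∑ j ∈ Finset.Ico 1 n,
      phiHat n β (j:ℤ) * (phiHat n κ (j:ℤ)) ^ 3 *
        (phiHat n κ ((j:ℤ)+1) * phiHat n κ 0 + phiHat n κ ((j:ℤ)-1) * phiHat n κ 0 -
          2 * phiHat n κ (j:ℤ) * phiHat n κ 1))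
      = 2 * (phiHat n κ 0 *
          (∑ j ∈ Finset.Ico 1 n, phiHat n β (j:ℤ) * phiHat n κ (j:ℤ) ^ 3 * phiHat n κ ((j:ℤ)+1)) -
        phiHat n κ 1 *
          (∑ j ∈ Finset.Ico 1 n, phiHat n β (j:ℤ) * phiHat n κ (j:ℤ) ^ 4)) := by
    have hterm : ∀ j ∈ Finset.Ico 1 n,
        phiHat n β (j:ℤ) * (phiHat n κ (j:ℤ)) ^ 3 *
          (phiHat n κ ((j:ℤ)+1) * phiHat n κ 0 + phiHat n κ ((j:ℤ)-1) * phiHat n κ 0 -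
            2 * phiHat n κ (j:ℤ) * phiHat n κ 1)
        = phiHat n κ 0 * (phiHat n β (j:ℤ) * phiHat n κ (j:ℤ) ^ 3 * phiHat n κ ((j:ℤ)+1)) +
          phiHat n κ 0 * (phiHat n β (j:ℤ) * phiHat n κ (j:ℤ) ^ 3 * phiHat n κ ((j:ℤ)-1)) -
          2 * (phiHat n κ 1 * (phiHat n β (j:ℤ) * phiHat n κ (j:ℤ) ^ 4)) := fun j _ => by ring
    symm
    calc 2 * (phiHat n κ 0 *
          (∑ j ∈ Finset.Ico 1 n, phiHat n β (j:ℤ) * phiHat n κ (j:ℤ) ^ 3 * phiHat n κ ((j:ℤ)+1)) -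
        phiHat n κ 1 * (∑ j ∈ Finset.Ico 1 n, phiHat n β (j:ℤ) * phiHat n κ (j:ℤ) ^ 4))
        = phiHat n κ 0 *
            (∑ j ∈ Finset.Ico 1 n, phiHat n β (j:ℤ) * phiHat n κ (j:ℤ) ^ 3 * phiHat n κ ((j:ℤ)+1)) +
          phiHat n κ 0 *
            (∑ j ∈ Finset.Ico 1 n, phiHat n β (j:ℤ) * phiHat n κ (j:ℤ) ^ 3 * phiHat n κ ((j:ℤ)+1)) -
          2 * (phiHat n κ 1 * (∑ j ∈ Finset.Ico 1 n, phiHat n β (j:ℤ) * phiHat n κ (j:ℤ) ^ 4)) := by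
          ring
      _ = phiHat n κ 0 *
            (∑ j ∈ Finset.Ico 1 n, phiHat n β (j:ℤ) * phiHat n κ (j:ℤ) ^ 3 * phiHat n κ ((j:ℤ)+1)) +
          phiHat n κ 0 *
            (∑ j ∈ Finset.Ico 1 n, phiHat n β (j:ℤ) * phiHat n κ (j:ℤ) ^ 3 * phiHat n κ ((j:ℤ)-1)) -
          2 * (phiHat n κ 1 * (∑ j ∈ Finset.Ico 1 n, phiHat n β (j:ℤ) * phiHat n κ (j:ℤ) ^ 4)) := by
          nth_rewrite 2 [refl_sum n β κ]
          rfl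
      _ = (∑ j ∈ Finset.Ico 1 n,
            phiHat n κ 0 * (phiHat n β (j:ℤ) * phiHat n κ (j:ℤ) ^ 3 * phiHat n κ ((j:ℤ)+1))) +
          (∑ j ∈ Finset.Ico 1 n,
            phiHat n κ 0 * (phiHat n β (j:ℤ) * phiHat n κ (j:ℤ) ^ 3 * phiHat n κ ((j:ℤ)-1))) -
          (∑ j ∈ Finset.Ico 1 n,
            2 * (phiHat n κ 1 * (phiHat n β (j:ℤ) * phiHat n κ (j:ℤ) ^ 4))) := by
          rw [Finset.mul_sum, Finset.mul_sum, Finset.mul_sum, Finset.mul_sum]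
      _ = ∑ j ∈ Finset.Ico 1 n,
            (phiHat n κ 0 * (phiHat n β (j:ℤ) * phiHat n κ (j:ℤ) ^ 3 * phiHat n κ ((j:ℤ)+1)) +
             phiHat n κ 0 * (phiHat n β (j:ℤ) * phiHat n κ (j:ℤ) ^ 3 * phiHat n κ ((j:ℤ)-1)) -
             2 * (phiHat n κ 1 * (phiHat n β (j:ℤ) * phiHat n κ (j:ℤ) ^ 4))) := by
          rw [← Finset.sum_add_distrib, ← Finset.sum_sub_distrib]
      _ = ∑ j ∈ Finset.Ico 1 n,
            phiHat n β (j:ℤ) * (phiHat n κ (j:ℤ)) ^ 3 *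
              (phiHat n κ ((j:ℤ)+1) * phiHat n κ 0 + phiHat n κ ((j:ℤ)-1) * phiHat n κ 0 -
                2 * phiHat n κ (j:ℤ) * phiHat n κ 1) :=
          (Finset.sum_congr rfl hterm).symm
  have hD : (∑ j ∈ Finset.range n, phiHat n β (j:ℤ) * phiHat n κ (j:ℤ) ^ 4 * phiHat n κ 1)
      = (∑ j ∈ Finset.range n, phiHat n β (j:ℤ) * phiHat n κ (j:ℤ) ^ 4) * phiHat n κ 1 := by
    rw [Finset.sum_mul]
  have hBpos : 0 < phiHat n β 0 * phiHat n κ 0 ^ 4 +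
      ∑ j ∈ Finset.Ico 1 n, phiHat n β (j:ℤ) * phiHat n κ (j:ℤ) ^ 4 := by
    have : 0 ≤ ∑ j ∈ Finset.Ico 1 n, phiHat n β (j:ℤ) * phiHat n κ (j:ℤ) ^ 4 :=
      Finset.sum_nonneg fun j _ => mul_nonneg (hPn _) (by positivity)
    nlinarith [hP0, hQ 0, pow_pos (hQ 0) 4]
  unfold alpha
  rw [hnum, hden, hAsplit, hBsplit, hCnum, hD, hBsplit]
  exact final_alg _ _ _ _ _ hP0.ne' (hQ 0).ne' (hQ 1).ne' hBpos.ne'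
end

section
/- Let n ≥ 2 be an integer, β ≥ 0 a real number, and κ > 0 a real number satisfying κ(1 + ε_κ) ≤ 1. Then 1 ≤ α(β,κ) and 1 − α(β,κ)^{−1} ≤ ζ_β·ξ_κ^2; in particular, if ζ_β·ξ_κ^2 < 1 then α(β,κ) ≤ 1/(1 − ζ_β·ξ_κ^2). -/
open scoped BigOperators

namespace S9

noncomputable def cc (a : ℝ) (j : ℕ) : ℝ := a ^ j / (Nat.factorial j : ℝ)

lemma cc_nonneg {a : ℝ} (ha : 0 ≤ a) (j : ℕ) : 0 ≤ cc a j := by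
  unfold cc; positivity

lemma cc_pos {a : ℝ} (ha : 0 < a) (j : ℕ) : 0 < cc a j := by
  unfold cc
  have := Nat.factorial_pos j
  positivity

lemma cc_zero (a : ℝ) : cc a 0 = 1 := by simp [cc]

lemma cc_one (a : ℝ) : cc a 1 = a := by simp [cc]

lemma summable_psi (n : ℕ) (hn : 0 < n) (a : ℝ) (j : ℕ) :
    Summable (fun k : ℕ => a ^ (j + k * n) / (Nat.factorial (j + k * n) : ℝ)) := by
  have h := Real.summable_pow_div_factorial a
  have hinj : Function.Injective (fun k : ℕ => j + k * n) := by
    intro x y hxy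
    simp only at hxy
    have : x * n = y * n := by omega
    exact Nat.eq_of_mul_eq_mul_right hn this
  exact h.comp_injective hinj

lemma psi_nonneg {n : ℕ} {a : ℝ} (ha : 0 ≤ a) (j : ℕ) : 0 ≤ psi n a j := by
  refine tsum_nonneg fun k => ?_
  have := Nat.factorial_pos (j + k * n)
  positivity

lemma psi_ge {n : ℕ} (hn : 0 < n) {a : ℝ} (ha : 0 ≤ a) (j : ℕ) :
    cc a j ≤ psi n a j := by
  have h := Summable.le_tsum (summable_psi n hn a j) 0 (fun k _ => by
    have := Nat.factorial_pos (j + k * n); positivity)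
  simpa [cc, psi] using h

lemma psi_le {n : ℕ} {a : ℝ} (ha : 0 ≤ a) (hx : a ^ n < 1) (j : ℕ) :
    psi n a j ≤ cc a j * (1 - a ^ n)⁻¹ := by
  have hxg : 0 ≤ a ^ n := pow_nonneg ha n
  have hs2 : Summable (fun k : ℕ => cc a j * (a ^ n) ^ k) :=
    (summable_geometric_of_lt_one hxg hx).mul_left _
  have hterm : ∀ k : ℕ, a ^ (j + k * n) / (Nat.factorial (j + k * n) : ℝ)
      ≤ cc a j * (a ^ n) ^ k := by
    intro k
    have hfac : (Nat.factorial j : ℝ) ≤ (Nat.factorial (j + k * n) : ℝ) := by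
      exact_mod_cast Nat.factorial_le (Nat.le_add_right _ _)
    have hfj : (0:ℝ) < (Nat.factorial j : ℝ) := by exact_mod_cast Nat.factorial_pos j
    have hpow : a ^ (j + k * n) = a ^ j * (a ^ n) ^ k := by
      rw [pow_add, ← pow_mul, mul_comm k n]
    calc a ^ (j + k * n) / (Nat.factorial (j + k * n) : ℝ)
        ≤ a ^ (j + k * n) / (Nat.factorial j : ℝ) := by
          apply div_le_div_of_nonneg_left (by positivity) hfj hfac
      _ = cc a j * (a ^ n) ^ k := by rw [hpow, cc]; ring
  have h := Summable.tsum_le_tsum hterm (summable_psi n (by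
    rcases Nat.eq_zero_or_pos n with h0 | h0
    · exfalso; rw [h0] at hx; simp at hx
    · exact h0) a j) hs2
  calc psi n a j ≤ ∑' k : ℕ, cc a j * (a ^ n) ^ k := h
    _ = cc a j * (1 - a ^ n)⁻¹ := by
        rw [tsum_mul_left, tsum_geometric_of_lt_one hxg hx]



noncomputable def G (n : ℕ) (a : ℝ) (m : ℤ) : ℝ := psi n a (m % (n : ℤ)).toNat

lemma emod_bounds {n : ℕ} (hn : 0 < n) (m : ℤ) : 0 ≤ m % (n : ℤ) ∧ m % (n : ℤ) < n := by
  have h1 : ((n : ℤ) ≠ 0) := by exact_mod_cast hn.ne'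
  exact ⟨Int.emod_nonneg m h1, Int.emod_lt_of_pos m (by exact_mod_cast hn)⟩

lemma G_eq {n : ℕ} (a : ℝ) {k : ℕ} (hk : k < n) : G n a (k : ℤ) = psi n a k := by
  unfold G
  congr 1
  have : ((k : ℤ) % (n : ℤ)) = k := Int.emod_eq_of_lt (by positivity) (by exact_mod_cast hk)
  rw [this]; simp

lemma G_periodic {n : ℕ} (a : ℝ) (m : ℤ) : G n a (m + n) = G n a m := by
  unfold G
  congr 2
  rw [show m + (n:ℤ) = m + (n:ℤ) * 1 by ring, Int.add_mul_emod_self_left]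

lemma phiHat_eq {n : ℕ} (hn : 0 < n) (a : ℝ) (j : ℤ) :
    phiHat n a j = ∑ k ∈ Finset.range n, psi n a k * G n a ((k : ℤ) + j) := by
  unfold phiHat
  refine Finset.sum_congr rfl fun k _ => ?_
  have hb := emod_bounds hn ((k : ℤ) + j)
  rw [Finset.sum_eq_single_of_mem ((((k : ℤ) + j) % (n : ℤ)).toNat)
    (Finset.mem_range.mpr (by omega))]
  · rw [if_pos]
    · rfl
    · have h0 : (((((k : ℤ) + j) % (n : ℤ)).toNat : ℤ)) = ((k : ℤ) + j) % (n : ℤ) :=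
        Int.toNat_of_nonneg hb.1
      rw [h0]
      have h1 : ((k : ℤ) + j) % (n : ℤ) ≡ (k : ℤ) + j [ZMOD (n : ℤ)] :=
        Int.emod_emod_of_dvd _ dvd_rfl
      have h2 := h1.sub (Int.ModEq.refl (k : ℤ))
      simpa using h2
  · intro b hb2 hne
    rw [if_neg]
    intro hcond
    have h1 : ((b : ℤ) - (k : ℤ)) ≡ j [ZMOD (n : ℤ)] := hcond
    have h2 := h1.add (Int.ModEq.refl (k : ℤ))
    have h3 : (b : ℤ) ≡ (k : ℤ) + j [ZMOD (n : ℤ)] := by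
      simpa [add_comm] using h2
    have h4 : (b : ℤ) % (n : ℤ) = ((k : ℤ) + j) % (n : ℤ) := h3
    have h5 : (b : ℤ) % (n : ℤ) = (b : ℤ) :=
      Int.emod_eq_of_lt (by positivity) (by exact_mod_cast Finset.mem_range.mp hb2)
    omega

lemma sum_shift {n : ℕ} (f : ℤ → ℝ) (hf : ∀ m, f (m + n) = f m) (c : ℤ) :
    ∑ k ∈ Finset.range n, f ((k : ℤ) + c) = ∑ k ∈ Finset.range n, f (k : ℤ) := by
  have key : ∀ g : ℤ → ℝ, (∀ m, g (m + n) = g m) →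
      ∑ k ∈ Finset.range n, g ((k : ℤ) + 1) = ∑ k ∈ Finset.range n, g (k : ℤ) := by
    intro g hg
    have h1 : ∑ k ∈ Finset.range (n + 1), g (k : ℤ)
        = (∑ k ∈ Finset.range n, g ((k : ℤ) + 1)) + g 0 := by
      rw [Finset.sum_range_succ' (fun k : ℕ => g (k : ℤ)) n]
      push_cast
      ring
    have h2 : ∑ k ∈ Finset.range (n + 1), g (k : ℤ)
        = (∑ k ∈ Finset.range n, g (k : ℤ)) + g (n : ℤ) := Finset.sum_range_succ _ n
    have h3 : g (n : ℤ) = g 0 := by simpa using hg 0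
    rw [h3] at h2
    linarith [h1.symm.trans h2]
  induction c using Int.induction_on with
  | zero => simp
  | succ i ih =>
      have := key (fun m => f (m + i)) (fun m => by
        simpa [add_right_comm] using hf (m + i))
      simp only [show ∀ k : ℕ, ((k : ℤ) + ((i : ℤ) + 1)) = ((k : ℤ) + 1 + i) from fun k => by ring]
      rw [this]
      exact ih
  | pred i ih =>
      have := key (fun m => f (m + (-(i : ℤ) - 1))) (fun m => by
        simpa [add_right_comm] using hf (m + (-(i : ℤ) - 1)))
      have heq : ∀ k : ℕ, ((k : ℤ) + 1 + (-(i : ℤ) - 1)) = ((k : ℤ) + (-(i : ℤ))) :=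
        fun k => by ring
      simp only [heq] at this
      rw [← this]
      exact ih

lemma phiHat_eq' {n : ℕ} (hn : 0 < n) (a : ℝ) (j : ℤ) :
    phiHat n a j = ∑ k ∈ Finset.range n, G n a (k : ℤ) * G n a ((k : ℤ) + j) := by
  rw [phiHat_eq hn a j]
  exact Finset.sum_congr rfl fun k hk => by
    rw [G_eq a (Finset.mem_range.mp hk)]


lemma G_nonneg {n : ℕ} {a : ℝ} (ha : 0 ≤ a) (m : ℤ) : 0 ≤ G n a m := psi_nonneg ha _

lemma phiHat_nonneg {n : ℕ} {a : ℝ} (ha : 0 ≤ a) (j : ℤ) : 0 ≤ phiHat n a j := by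
  unfold phiHat
  refine Finset.sum_nonneg fun k _ => Finset.sum_nonneg fun k' _ => ?_
  split
  · exact mul_nonneg (psi_nonneg ha _) (psi_nonneg ha _)
  · exact le_refl _

lemma phiHat_periodic {n : ℕ} (hn : 0 < n) (a : ℝ) (j : ℤ) :
    phiHat n a (j + n) = phiHat n a j := by
  rw [phiHat_eq hn, phiHat_eq hn]
  refine Finset.sum_congr rfl fun k _ => ?_
  rw [show ((k:ℤ) + (j + n)) = ((k:ℤ) + j) + n by ring, G_periodic]

lemma phiHat_symm {n : ℕ} (hn : 0 < n) (a : ℝ) (j : ℤ) :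
    phiHat n a (-j) = phiHat n a j := by
  rw [phiHat_eq' hn, phiHat_eq' hn]
  have hper : ∀ m : ℤ, (fun m => G n a m * G n a (m - j)) (m + n)
      = (fun m => G n a m * G n a (m - j)) m := by
    intro m
    simp only
    rw [G_periodic, show m + n - j = (m - j) + n by ring, G_periodic]
  have h := sum_shift (fun m => G n a m * G n a (m - j)) hper j
  simp only [add_sub_cancel_right] at h
  calc ∑ k ∈ Finset.range n, G n a k * G n a ((k:ℤ) + -j)
      = ∑ k ∈ Finset.range n, G n a k * G n a ((k:ℤ) - j) := by
        refine Finset.sum_congr rfl fun k _ => by rw [sub_eq_add_neg]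
    _ = ∑ k ∈ Finset.range n, G n a ((k:ℤ) + j) * G n a k := h.symm
    _ = ∑ k ∈ Finset.range n, G n a k * G n a ((k:ℤ) + j) := by
        refine Finset.sum_congr rfl fun k _ => mul_comm _ _

lemma phiHat_zero {n : ℕ} (hn : 0 < n) (a : ℝ) :
    phiHat n a 0 = ∑ k ∈ Finset.range n, (G n a k)^2 := by
  rw [phiHat_eq' hn]
  refine Finset.sum_congr rfl fun k _ => by rw [add_zero]; ring

lemma sq_shift {n : ℕ} (a : ℝ) (j : ℤ) :
    ∑ k ∈ Finset.range n, (G n a ((k:ℤ) + j))^2 = ∑ k ∈ Finset.range n, (G n a k)^2 :=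
  sum_shift (fun m => (G n a m)^2) (fun m => by rw [G_periodic]) j

lemma phiHat_le_zero {n : ℕ} (hn : 0 < n) {a : ℝ} (ha : 0 ≤ a) (j : ℤ) :
    phiHat n a j ≤ phiHat n a 0 := by
  have h2 : 2 * phiHat n a j ≤ 2 * phiHat n a 0 := by
    rw [phiHat_eq' hn, phiHat_zero hn]
    calc 2 * ∑ k ∈ Finset.range n, G n a k * G n a ((k:ℤ)+j)
        = ∑ k ∈ Finset.range n, 2 * (G n a k * G n a ((k:ℤ)+j)) := by rw [Finset.mul_sum]
      _ ≤ ∑ k ∈ Finset.range n, ((G n a k)^2 + (G n a ((k:ℤ)+j))^2) := by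
          refine Finset.sum_le_sum fun k _ => ?_
          have := two_mul_le_add_sq (G n a k) (G n a ((k:ℤ)+j))
          linarith
      _ = ∑ k ∈ Finset.range n, (G n a k)^2 + ∑ k ∈ Finset.range n, (G n a ((k:ℤ)+j))^2 :=
          Finset.sum_add_distrib
      _ = 2 * ∑ k ∈ Finset.range n, (G n a k)^2 := by rw [sq_shift]; ring
  linarith

lemma phiHat_CS {n : ℕ} (hn : 0 < n) {a : ℝ} (ha : 0 ≤ a) :
    2 * (phiHat n a 1)^2 ≤ phiHat n a 0 * (phiHat n a 0 + phiHat n a 2) := by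
  have hCS := Finset.sum_mul_sq_le_sq_mul_sq (Finset.range n)
    (fun k : ℕ => G n a k) (fun k : ℕ => G n a ((k:ℤ) + 1) + G n a ((k:ℤ) + -1))
  have hX : ∑ k ∈ Finset.range n, G n a ((k:ℤ)+1) * G n a ((k:ℤ) + -1) = phiHat n a 2 := by
    have hp : ∀ m : ℤ, (fun m => G n a (m + 2) * G n a m) (m + n)
        = (fun m => G n a (m+2) * G n a m) m := by
      intro m; simp only
      rw [show m + n + 2 = (m + 2) + n by ring, G_periodic, G_periodic]
    have h := sum_shift (fun m => G n a (m + 2) * G n a m) hp (-1)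
    have h2 : ∑ k ∈ Finset.range n, G n a ((k:ℤ)+1) * G n a ((k:ℤ) + -1)
        = ∑ k ∈ Finset.range n, G n a ((k:ℤ) + -1 + 2) * G n a ((k:ℤ) + -1) := by
      refine Finset.sum_congr rfl fun k _ => ?_
      rw [show (k:ℤ) + -1 + 2 = (k:ℤ)+1 by ring]
    rw [h2, h, phiHat_eq' hn]
    exact Finset.sum_congr rfl fun k _ => mul_comm _ _
  have hm1 : phiHat n a (-1) = phiHat n a 1 := phiHat_symm hn a 1
  have hA : ∑ k ∈ Finset.range n, G n a (k:ℤ) * (G n a ((k:ℤ) + 1) + G n a ((k:ℤ) + -1))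
      = 2 * phiHat n a 1 := by
    have e : ∑ k ∈ Finset.range n, G n a (k:ℤ) * (G n a ((k:ℤ) + 1) + G n a ((k:ℤ) + -1))
        = ∑ k ∈ Finset.range n, G n a (k:ℤ) * G n a ((k:ℤ) + 1)
          + ∑ k ∈ Finset.range n, G n a (k:ℤ) * G n a ((k:ℤ) + -1) := by
      rw [← Finset.sum_add_distrib]
      exact Finset.sum_congr rfl fun k _ => by ring
    rw [e, ← phiHat_eq' hn, ← phiHat_eq' hn, hm1]
    ring
  have hB : ∑ k ∈ Finset.range n, (G n a ((k:ℤ) + 1) + G n a ((k:ℤ) + -1))^2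
      = 2 * phiHat n a 0 + 2 * phiHat n a 2 := by
    have e : ∑ k ∈ Finset.range n, (G n a ((k:ℤ) + 1) + G n a ((k:ℤ) + -1))^2
        = ∑ k ∈ Finset.range n, (G n a ((k:ℤ)+1))^2
          + (∑ k ∈ Finset.range n, (G n a ((k:ℤ) + -1))^2
          + ∑ k ∈ Finset.range n, 2 * (G n a ((k:ℤ)+1) * G n a ((k:ℤ) + -1))) := by
      rw [← Finset.sum_add_distrib, ← Finset.sum_add_distrib]
      exact Finset.sum_congr rfl fun k _ => by ring
    rw [e, sq_shift, sq_shift, ← Finset.mul_sum, hX, ← phiHat_zero hn]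
    ring
  rw [hA, hB, ← phiHat_zero hn] at hCS
  have h0 : 0 ≤ phiHat n a 0 := phiHat_nonneg ha 0
  nlinarith [hCS]

lemma phiHat_split {n : ℕ} {j : ℕ} (hj1 : 1 ≤ j) (hjn : j < n) (a : ℝ) :
    phiHat n a (j : ℤ) = (∑ k ∈ Finset.range (n-j), psi n a k * psi n a (k+j))
      + ∑ m ∈ Finset.range j, psi n a (m+(n-j)) * psi n a m := by
  have hn : 0 < n := lt_of_le_of_lt (Nat.zero_le j) hjn
  rw [phiHat_eq hn a (j : ℤ)]
  have hsplit : Finset.range n = Finset.Ico 0 n := by rw [Finset.range_eq_Ico]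
  rw [hsplit, ← Finset.sum_Ico_consecutive _ (Nat.zero_le (n-j)) (Nat.sub_le n j)]
  congr 1
  · rw [← Finset.range_eq_Ico]
    refine Finset.sum_congr rfl fun k hk => ?_
    have hk' : k + j < n := by
      have := Finset.mem_range.mp hk; omega
    congr 1
    have : ((k:ℤ) + (j:ℤ)) = ((k + j : ℕ) : ℤ) := by push_cast; ring
    rw [this, G_eq a hk']
  · rw [Finset.sum_Ico_eq_sum_range]
    have hnn : n - (n - j) = j := by omega
    rw [hnn]
    refine Finset.sum_congr rfl fun m hm => ?_
    have hm' : m < j := Finset.mem_range.mp hm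
    have e1 : n - j + m = m + (n - j) := by omega
    rw [e1]
    congr 1
    have e2 : (((m + (n - j) : ℕ)):ℤ) + (j:ℤ) = ((m:ℤ) + (n:ℤ)) := by
      push_cast [Nat.cast_sub hjn.le]; ring
    rw [e2, G_periodic, G_eq a (lt_trans hm' hjn)]

lemma phiHat_ge {n : ℕ} {j : ℕ} (hj1 : 1 ≤ j) (hjn : j < n) {a : ℝ} (ha : 0 ≤ a) :
    cc a j + cc a (n-j) ≤ phiHat n a (j : ℤ) := by
  have hn : 0 < n := lt_of_le_of_lt (Nat.zero_le j) hjn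
  rw [phiHat_split hj1 hjn a]
  have h1 : cc a j ≤ ∑ k ∈ Finset.range (n-j), psi n a k * psi n a (k+j) := by
    have h0 : (0:ℕ) ∈ Finset.range (n-j) := Finset.mem_range.mpr (by omega)
    have hterm : cc a j ≤ psi n a 0 * psi n a (0+j) := by
      have g1 : 1 ≤ psi n a 0 := by simpa [cc] using psi_ge hn ha 0
      have g2 : cc a j ≤ psi n a (0+j) := by simpa using psi_ge hn ha j
      calc cc a j = 1 * cc a j := by ring
        _ ≤ psi n a 0 * psi n a (0+j) :=
          mul_le_mul g1 g2 (cc_nonneg ha j) (le_trans zero_le_one g1)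
    exact le_trans hterm (Finset.single_le_sum
      (f := fun k => psi n a k * psi n a (k+j))
      (fun k _ => mul_nonneg (psi_nonneg ha k) (psi_nonneg ha (k+j))) h0)
  have h2 : cc a (n-j) ≤ ∑ m ∈ Finset.range j, psi n a (m+(n-j)) * psi n a m := by
    have h0 : (0:ℕ) ∈ Finset.range j := Finset.mem_range.mpr (by omega)
    have hterm : cc a (n-j) ≤ psi n a (0+(n-j)) * psi n a 0 := by
      have g1 : 1 ≤ psi n a 0 := by simpa [cc] using psi_ge hn ha 0
      have g2 : cc a (n-j) ≤ psi n a (0+(n-j)) := by simpa using psi_ge hn ha (n-j)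
      calc cc a (n-j) = cc a (n-j) * 1 := by ring
        _ ≤ psi n a (0+(n-j)) * psi n a 0 :=
          mul_le_mul g2 g1 zero_le_one (psi_nonneg ha _)
    exact le_trans hterm (Finset.single_le_sum
      (f := fun m => psi n a (m+(n-j)) * psi n a m)
      (fun m _ => mul_nonneg (psi_nonneg ha _) (psi_nonneg ha m)) h0)
  linarith

lemma phiHat_zero_ge_one {n : ℕ} (hn : 0 < n) {a : ℝ} (ha : 0 ≤ a) :
    1 ≤ phiHat n a 0 := by
  rw [phiHat_zero hn]
  have h0 : (0:ℕ) ∈ Finset.range n := Finset.mem_range.mpr hn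
  have hterm : 1 ≤ (G n a (0:ℕ))^2 := by
    have : G n a ((0:ℕ):ℤ) = psi n a 0 := G_eq a hn
    rw [this]
    have g1 : 1 ≤ psi n a 0 := by simpa [cc] using psi_ge hn ha 0
    nlinarith
  exact le_trans hterm (Finset.single_le_sum (f := fun k : ℕ => (G n a k)^2)
    (fun k _ => sq_nonneg _) h0)

lemma phiHat_zero_ge {n : ℕ} (hn : 2 ≤ n) {a : ℝ} (ha : 0 ≤ a) :
    1 + a^2 ≤ phiHat n a 0 := by
  have hn0 : 0 < n := by omega
  rw [phiHat_zero hn0]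
  have hsub : ({0, 1} : Finset ℕ) ⊆ Finset.range n := by
    intro x hx
    simp only [Finset.mem_insert, Finset.mem_singleton] at hx
    rcases hx with h | h <;> simp [h] <;> omega
  have hsum : ∑ k ∈ ({0,1} : Finset ℕ), (G n a k)^2 ≤ ∑ k ∈ Finset.range n, (G n a k)^2 :=
    Finset.sum_le_sum_of_subset_of_nonneg hsub (fun k _ _ => sq_nonneg _)
  have e : ∑ k ∈ ({0,1} : Finset ℕ), (G n a k)^2 = (G n a (0:ℕ))^2 + (G n a (1:ℕ))^2 := by
    rw [Finset.sum_insert (by norm_num), Finset.sum_singleton]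
  have g0 : G n a ((0:ℕ):ℤ) = psi n a 0 := G_eq a hn0
  have g1 : G n a ((1:ℕ):ℤ) = psi n a 1 := G_eq a (by omega)
  have p0 : 1 ≤ psi n a 0 := by simpa [cc] using psi_ge hn0 ha 0
  have p1 : a ≤ psi n a 1 := by simpa [cc] using psi_ge hn0 ha 1
  have hp1 : 0 ≤ psi n a 1 := psi_nonneg ha 1
  calc 1 + a^2 ≤ (psi n a 0)^2 + (psi n a 1)^2 := by nlinarith
    _ = ∑ k ∈ ({0,1} : Finset ℕ), (G n a k)^2 := by rw [e, g0, g1]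
    _ ≤ _ := hsum


section Kappa

variable {n : ℕ} {κ : ℝ}

lemma geom_bound (hk : 0 ≤ κ) (hh : κ ≤ 1/2) (T : ℕ) :
    ∑ k ∈ Finset.range T, (κ^2)^k ≤ (1-κ^2)⁻¹ := by
  have h1 : (0:ℝ) ≤ κ^2 := sq_nonneg κ
  have h2 : κ^2 < 1 := by nlinarith
  refine le_trans (Summable.sum_le_tsum (Finset.range T) (fun k _ => pow_nonneg h1 k)
    (summable_geometric_of_lt_one h1 h2)) ?_
  rw [tsum_geometric_of_lt_one h1 h2]

lemma cc_mul_le (hk : 0 ≤ κ) (j k : ℕ) :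
    cc κ k * cc κ (k+j) ≤ cc κ j * (κ^2)^k := by
  unfold cc
  have hfj : (0:ℝ) < (Nat.factorial j : ℝ) := by exact_mod_cast Nat.factorial_pos j
  have hnum : κ^k * κ^(k+j) = κ^j * (κ^2)^k := by
    rw [← pow_add, ← pow_mul, ← pow_add]
    congr 1
    ring
  have hden : (Nat.factorial j : ℝ) ≤ (Nat.factorial k : ℝ) * (Nat.factorial (k+j) : ℝ) := by
    have h1 : (1:ℝ) ≤ (Nat.factorial k : ℝ) := by exact_mod_cast Nat.one_le_iff_ne_zero.mpr (Nat.factorial_ne_zero k)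
    have h2 : (Nat.factorial j : ℝ) ≤ (Nat.factorial (k+j) : ℝ) := by
      exact_mod_cast Nat.factorial_le (Nat.le_add_left j k)
    nlinarith
  calc κ^k / (Nat.factorial k : ℝ) * (κ^(k+j) / (Nat.factorial (k+j) : ℝ))
      = (κ^k * κ^(k+j)) / ((Nat.factorial k : ℝ) * (Nat.factorial (k+j) : ℝ)) := by ring
    _ ≤ (κ^k * κ^(k+j)) / (Nat.factorial j : ℝ) := by
        apply div_le_div_of_nonneg_left (by positivity) hfj hden
    _ = κ^j / (Nat.factorial j : ℝ) * (κ^2)^k := by rw [hnum]; ring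

lemma sum1 (hk : 0 ≤ κ) (hh : κ ≤ 1/2) (j T : ℕ) :
    ∑ k ∈ Finset.range T, cc κ k * cc κ (k+j) ≤ cc κ j * (1-κ^2)⁻¹ := by
  calc ∑ k ∈ Finset.range T, cc κ k * cc κ (k+j)
      ≤ ∑ k ∈ Finset.range T, cc κ j * (κ^2)^k :=
        Finset.sum_le_sum fun k _ => cc_mul_le hk j k
    _ = cc κ j * ∑ k ∈ Finset.range T, (κ^2)^k := by rw [Finset.mul_sum]
    _ ≤ cc κ j * (1-κ^2)⁻¹ :=
        mul_le_mul_of_nonneg_left (geom_bound hk hh T) (cc_nonneg hk j)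

lemma sum1' (hk : 0 ≤ κ) (hh : κ ≤ 1/2) (T : ℕ) :
    ∑ k ∈ Finset.range T, cc κ k * cc κ (k+1) ≤ κ * (1 + κ^2 * (1-κ^2)⁻¹ / 2) := by
  have hQ : (0:ℝ) ≤ (1-κ^2)⁻¹ := by
    have h2 : κ^2 < 1 := by nlinarith
    have h3 : (0:ℝ) < 1 - κ^2 := by linarith
    positivity
  cases T with
  | zero =>
    simp only [Finset.range_zero, Finset.sum_empty]
    have : (0:ℝ) ≤ κ^2 * (1-κ^2)⁻¹ / 2 := by positivity
    nlinarith
  | succ T =>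
    rw [Finset.sum_range_succ' (fun k => cc κ k * cc κ (k+1)) T]
    have hf0 : cc κ 0 * cc κ (0+1) = κ := by simp [cc_zero, cc_one]
    have hterm : ∀ k : ℕ, cc κ (k+1) * cc κ (k+1+1) ≤ (κ/2) * (κ^2)^(k+1) := by
      intro k
      unfold cc
      have hden : (2:ℝ) ≤ (Nat.factorial (k+1) : ℝ) * (Nat.factorial (k+1+1) : ℝ) := by
        have h1 : (1:ℝ) ≤ (Nat.factorial (k+1) : ℝ) := by
          exact_mod_cast Nat.one_le_iff_ne_zero.mpr (Nat.factorial_ne_zero (k+1))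
        have h2 : (2:ℝ) ≤ (Nat.factorial (k+1+1) : ℝ) := by
          exact_mod_cast Nat.factorial_le (by omega : 2 ≤ k+1+1)
        nlinarith
      have hnum : κ^(k+1) * κ^(k+1+1) = κ * (κ^2)^(k+1) := by
        rw [← pow_add, ← pow_mul, ← pow_succ']
        congr 1
        ring
      calc κ^(k+1) / (Nat.factorial (k+1) : ℝ) * (κ^(k+1+1) / (Nat.factorial (k+1+1) : ℝ))
          = (κ^(k+1) * κ^(k+1+1)) / ((Nat.factorial (k+1) : ℝ) * (Nat.factorial (k+1+1) : ℝ)) := by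
            ring
        _ ≤ (κ^(k+1) * κ^(k+1+1)) / 2 := by
            apply div_le_div_of_nonneg_left (by positivity) (by norm_num) hden
        _ = (κ/2) * (κ^2)^(k+1) := by rw [hnum]; ring
    have hsum : ∑ k ∈ Finset.range T, cc κ (k+1) * cc κ (k+1+1)
        ≤ (κ/2) * κ^2 * ∑ k ∈ Finset.range T, (κ^2)^k := by
      calc ∑ k ∈ Finset.range T, cc κ (k+1) * cc κ (k+1+1)
          ≤ ∑ k ∈ Finset.range T, (κ/2) * (κ^2)^(k+1) :=
            Finset.sum_le_sum fun k _ => hterm k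
        _ = (κ/2) * κ^2 * ∑ k ∈ Finset.range T, (κ^2)^k := by
            rw [Finset.mul_sum]
            refine Finset.sum_congr rfl fun k _ => by rw [pow_succ']; ring
    have hgeom := geom_bound hk hh T
    have h2 : (κ/2) * κ^2 * ∑ k ∈ Finset.range T, (κ^2)^k ≤ (κ/2) * κ^2 * (1-κ^2)⁻¹ :=
      mul_le_mul_of_nonneg_left hgeom (by positivity)
    rw [hf0]
    calc (∑ k ∈ Finset.range T, cc κ (k+1) * cc κ (k+1+1)) + κ
        ≤ (κ/2) * κ^2 * (1-κ^2)⁻¹ + κ := by linarith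
      _ = κ * (1 + κ^2 * (1-κ^2)⁻¹ / 2) := by ring

lemma pow_n_lt (hk : 0 ≤ κ) (hh : κ ≤ 1/2) (hn : 2 ≤ n) : κ^n ≤ 1/4 := by
  calc κ^n ≤ κ^2 := pow_le_pow_of_le_one hk (by linarith) hn
    _ ≤ 1/4 := by nlinarith

lemma P_nonneg (hk : 0 ≤ κ) (hh : κ ≤ 1/2) (hn : 2 ≤ n) : (0:ℝ) ≤ (1-κ^n)⁻¹ := by
  have h := pow_n_lt hk hh hn
  have : (0:ℝ) < 1 - κ^n := by linarith
  positivity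

lemma psi_leP (hk : 0 ≤ κ) (hh : κ ≤ 1/2) (hn : 2 ≤ n) (i : ℕ) :
    psi n κ i ≤ cc κ i * (1-κ^n)⁻¹ :=
  psi_le hk (lt_of_le_of_lt (pow_n_lt hk hh hn) (by norm_num)) i

lemma phiHat_leU (hk : 0 < κ) (hh : κ ≤ 1/2) (hn : 2 ≤ n) {j : ℕ}
    (hj1 : 1 ≤ j) (hjn : j < n) :
    phiHat n κ (j : ℤ) ≤ (1-κ^n)⁻¹^2 * (1-κ^2)⁻¹ * (cc κ j + cc κ (n-j)) := by
  have hk0 : (0:ℝ) ≤ κ := hk.le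
  set P := (1-κ^n)⁻¹ with hPdef
  have hP0 : (0:ℝ) ≤ P := P_nonneg hk0 hh hn
  rw [phiHat_split hj1 hjn κ]
  have hS1 : ∑ k ∈ Finset.range (n-j), psi n κ k * psi n κ (k+j)
      ≤ P^2 * (cc κ j * (1-κ^2)⁻¹) := by
    calc ∑ k ∈ Finset.range (n-j), psi n κ k * psi n κ (k+j)
        ≤ ∑ k ∈ Finset.range (n-j), (cc κ k * P) * (cc κ (k+j) * P) := by
          refine Finset.sum_le_sum fun k _ => ?_
          exact mul_le_mul (psi_leP hk0 hh hn k) (psi_leP hk0 hh hn (k+j))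
            (psi_nonneg hk0 _) (mul_nonneg (cc_nonneg hk0 _) hP0)
      _ = P^2 * ∑ k ∈ Finset.range (n-j), cc κ k * cc κ (k+j) := by
          rw [Finset.mul_sum]
          exact Finset.sum_congr rfl fun k _ => by ring
      _ ≤ P^2 * (cc κ j * (1-κ^2)⁻¹) :=
          mul_le_mul_of_nonneg_left (sum1 hk0 hh j (n-j)) (pow_nonneg hP0 2)
  have hS2 : ∑ m ∈ Finset.range j, psi n κ (m+(n-j)) * psi n κ m
      ≤ P^2 * (cc κ (n-j) * (1-κ^2)⁻¹) := by
    calc ∑ m ∈ Finset.range j, psi n κ (m+(n-j)) * psi n κ m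
        ≤ ∑ m ∈ Finset.range j, (cc κ (m+(n-j)) * P) * (cc κ m * P) := by
          refine Finset.sum_le_sum fun m _ => ?_
          exact mul_le_mul (psi_leP hk0 hh hn (m+(n-j))) (psi_leP hk0 hh hn m)
            (psi_nonneg hk0 _) (mul_nonneg (cc_nonneg hk0 _) hP0)
      _ = P^2 * ∑ m ∈ Finset.range j, cc κ m * cc κ (m+(n-j)) := by
          rw [Finset.mul_sum]
          exact Finset.sum_congr rfl fun m _ => by ring
      _ ≤ P^2 * (cc κ (n-j) * (1-κ^2)⁻¹) :=
          mul_le_mul_of_nonneg_left (sum1 hk0 hh (n-j) j) (pow_nonneg hP0 2)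
  calc (∑ k ∈ Finset.range (n-j), psi n κ k * psi n κ (k+j))
        + ∑ m ∈ Finset.range j, psi n κ (m+(n-j)) * psi n κ m
      ≤ P^2 * (cc κ j * (1-κ^2)⁻¹) + P^2 * (cc κ (n-j) * (1-κ^2)⁻¹) := by linarith
    _ = P^2 * (1-κ^2)⁻¹ * (cc κ j + cc κ (n-j)) := by ring

lemma phiHat_one_leU (hk : 0 < κ) (hh : κ ≤ 1/2) (hn : 2 ≤ n) :
    phiHat n κ 1 ≤ (1-κ^n)⁻¹^2 * (κ * (1 + κ^2 * (1-κ^2)⁻¹ / 2) + cc κ (n-1)) := by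
  have hk0 : (0:ℝ) ≤ κ := hk.le
  set P := (1-κ^n)⁻¹ with hPdef
  have hP0 : (0:ℝ) ≤ P := P_nonneg hk0 hh hn
  have h1 : ((1:ℕ):ℤ) = (1:ℤ) := by norm_num
  rw [← h1, phiHat_split (le_refl 1) (by omega : 1 < n) κ]
  have hS1 : ∑ k ∈ Finset.range (n-1), psi n κ k * psi n κ (k+1)
      ≤ P^2 * (κ * (1 + κ^2 * (1-κ^2)⁻¹ / 2)) := by
    calc ∑ k ∈ Finset.range (n-1), psi n κ k * psi n κ (k+1)
        ≤ ∑ k ∈ Finset.range (n-1), (cc κ k * P) * (cc κ (k+1) * P) := by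
          refine Finset.sum_le_sum fun k _ => ?_
          exact mul_le_mul (psi_leP hk0 hh hn k) (psi_leP hk0 hh hn (k+1))
            (psi_nonneg hk0 _) (mul_nonneg (cc_nonneg hk0 _) hP0)
      _ = P^2 * ∑ k ∈ Finset.range (n-1), cc κ k * cc κ (k+1) := by
          rw [Finset.mul_sum]
          exact Finset.sum_congr rfl fun k _ => by ring
      _ ≤ P^2 * (κ * (1 + κ^2 * (1-κ^2)⁻¹ / 2)) :=
          mul_le_mul_of_nonneg_left (sum1' hk0 hh (n-1)) (pow_nonneg hP0 2)
  have hS2 : ∑ m ∈ Finset.range 1, psi n κ (m+(n-1)) * psi n κ m ≤ P^2 * cc κ (n-1) := by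
    rw [Finset.sum_range_one]
    have e : psi n κ (0+(n-1)) = psi n κ (n-1) := by rw [Nat.zero_add]
    rw [e]
    calc psi n κ (n-1) * psi n κ 0 ≤ (cc κ (n-1) * P) * (cc κ 0 * P) :=
          mul_le_mul (psi_leP hk0 hh hn (n-1)) (psi_leP hk0 hh hn 0)
            (psi_nonneg hk0 _) (mul_nonneg (cc_nonneg hk0 _) hP0)
      _ = P^2 * cc κ (n-1) * cc κ 0 := by ring
      _ = P^2 * cc κ (n-1) := by rw [cc_zero]; ring
  calc (∑ k ∈ Finset.range (n-1), psi n κ k * psi n κ (k+1))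
        + ∑ m ∈ Finset.range 1, psi n κ (m+(n-1)) * psi n κ m
      ≤ P^2 * (κ * (1 + κ^2 * (1-κ^2)⁻¹ / 2)) + P^2 * cc κ (n-1) := by linarith
    _ = P^2 * (κ * (1 + κ^2 * (1-κ^2)⁻¹ / 2) + cc κ (n-1)) := by ring

end Kappa


section Main

variable {n : ℕ} {κ : ℝ}

lemma phiHat_nsub (hn0 : 0 < n) (a : ℝ) (j : ℤ) :
    phiHat n a ((n:ℤ) - j) = phiHat n a j := by
  rw [show (n:ℤ) - j = -j + n by ring, phiHat_periodic hn0, phiHat_symm hn0]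

lemma cc_step (hk : 0 ≤ κ) {m : ℕ} (hm : 1 ≤ m) : cc κ (m+1) ≤ (κ/2) * cc κ m := by
  unfold cc
  have hf : (0:ℝ) < (Nat.factorial m : ℝ) := by exact_mod_cast Nat.factorial_pos m
  have hm2 : (2:ℝ) ≤ ((m:ℝ)+1) := by exact_mod_cast by omega
  have e1 : ((Nat.factorial (m+1) : ℝ)) = ((m:ℝ)+1) * (Nat.factorial m : ℝ) := by
    rw [Nat.factorial_succ]; push_cast; ring
  rw [e1]
  have h := div_le_div_of_nonneg_left (a := κ^(m+1))
    (by positivity : (0:ℝ) ≤ κ^(m+1))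
    (by positivity : (0:ℝ) < 2 * (Nat.factorial m : ℝ))
    (by nlinarith : 2 * (Nat.factorial m : ℝ) ≤ ((m:ℝ)+1) * (Nat.factorial m : ℝ))
  refine h.trans_eq ?_
  rw [pow_succ]
  ring

lemma cc_le2 (hk : 0 ≤ κ) (hh : κ ≤ 1/2) {m : ℕ} (hm : 2 ≤ m) : cc κ m ≤ κ^2/2 := by
  unfold cc
  have h1 : κ^m ≤ κ^2 := pow_le_pow_of_le_one hk (by linarith) hm
  have h2 : (2:ℝ) ≤ (Nat.factorial m : ℝ) := by
    exact_mod_cast Nat.factorial_le hm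
  have h3 : (0:ℝ) < (Nat.factorial m : ℝ) := by linarith
  rw [div_le_div_iff₀ h3 (by norm_num)]
  nlinarith [pow_nonneg hk m]

lemma cc_nm1_le (hk : 0 ≤ κ) (hh : κ ≤ 1/2) (hn : 4 ≤ n) : cc κ (n-1) ≤ κ * κ^2 / 6 := by
  unfold cc
  have h1 : κ^(n-1) ≤ κ^3 := pow_le_pow_of_le_one hk (by linarith) (by omega)
  have h2 : (6:ℝ) ≤ (Nat.factorial (n-1) : ℝ) := by
    have : Nat.factorial 3 ≤ Nat.factorial (n-1) := Nat.factorial_le (by omega)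
    exact_mod_cast this
  have h3 : (0:ℝ) < (Nat.factorial (n-1) : ℝ) := by linarith
  rw [div_le_div_iff₀ h3 (by norm_num)]
  have : κ^3 = κ * κ^2 := by ring
  nlinarith [pow_nonneg hk (n-1)]

lemma Q_le (hk : 0 ≤ κ) (hh : κ ≤ 1/2) : (1-κ^2)⁻¹ ≤ 4/3 := by
  have h1 : (3/4 : ℝ) ≤ 1 - κ^2 := by nlinarith
  calc (1-κ^2)⁻¹ ≤ ((3:ℝ)/4)⁻¹ := inv_anti₀ (by norm_num) h1
    _ = 4/3 := by norm_num

lemma Q_ge (hk : 0 ≤ κ) (hh : κ ≤ 1/2) : (1:ℝ) ≤ (1-κ^2)⁻¹ := by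
  have h1 : (0:ℝ) < 1 - κ^2 := by nlinarith
  rw [le_inv_comm₀] <;> nlinarith

lemma P_le (hk : 0 ≤ κ) (hh : κ ≤ 1/2) (hn : 4 ≤ n) : (1-κ^n)⁻¹ ≤ 16/15 := by
  have h0 : κ^n ≤ κ^4 := pow_le_pow_of_le_one hk (by linarith) hn
  have h2 : κ^2 ≤ 1/4 := by nlinarith
  have h4 : κ^4 ≤ 1/16 := by
    calc κ^4 = κ^2 * κ^2 := by ring
      _ ≤ (1/4) * (1/4) := mul_le_mul h2 h2 (sq_nonneg κ) (by norm_num)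
      _ = 1/16 := by norm_num
  have h1 : (15/16 : ℝ) ≤ 1 - κ^n := by linarith
  calc (1-κ^n)⁻¹ ≤ ((15:ℝ)/16)⁻¹ := inv_anti₀ (by norm_num) h1
    _ = 16/15 := by norm_num

lemma P_le43 (hk : 0 ≤ κ) (hh : κ ≤ 1/2) (hn : 2 ≤ n) : (1-κ^n)⁻¹ ≤ 4/3 := by
  have h0 := pow_n_lt hk hh hn
  have h1 : (3/4 : ℝ) ≤ 1 - κ^n := by linarith
  calc (1-κ^n)⁻¹ ≤ ((3:ℝ)/4)⁻¹ := inv_anti₀ (by norm_num) h1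
    _ = 4/3 := by norm_num

lemma numeric_core {κ P Q : ℝ} (hk0 : 0 ≤ κ) (hh : κ ≤ 1/2) (hP0 : 0 ≤ P)
    (hQ0 : 0 ≤ Q) (hPle : P ≤ 16/15) (hQle : Q ≤ 4/3) :
    P^4 * Q * κ^2 * (1 + κ^2 * Q / 2 + κ^2/6) ≤ 1 + κ^2 := by
  have hB : 1 + κ^2 * Q / 2 + κ^2/6 ≤ 1 + (5/6) * κ^2 := by nlinarith [sq_nonneg κ]
  have hB0 : (0:ℝ) ≤ 1 + κ^2 * Q / 2 + κ^2/6 := by positivity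
  have hP4 : P^4 ≤ (16/15:ℝ)^4 := pow_le_pow_left₀ hP0 hPle 4
  have ht : κ^2 ≤ 1/4 := by nlinarith
  have ht0 : (0:ℝ) ≤ κ^2 := sq_nonneg κ
  have step1 : P^4 * Q ≤ (16/15:ℝ)^4 * (4/3) :=
    mul_le_mul hP4 hQle hQ0 (by norm_num)
  have step2 : P^4 * Q * κ^2 ≤ (16/15:ℝ)^4 * (4/3) * κ^2 :=
    mul_le_mul_of_nonneg_right step1 ht0
  have step3 : P^4 * Q * κ^2 * (1 + κ^2 * Q / 2 + κ^2/6)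
      ≤ (16/15:ℝ)^4 * (4/3) * κ^2 * (1 + (5/6) * κ^2) :=
    mul_le_mul step2 hB hB0 (by positivity)
  refine step3.trans ?_
  have hBpos : (0:ℝ) ≤ 1 + (5/6) * κ^2 := by positivity
  have hcc : (16/15:ℝ)^4 * (4/3) ≤ 26/15 := by norm_num
  have step4 : (16/15:ℝ)^4 * (4/3) * κ^2 * (1 + (5/6) * κ^2)
      ≤ (26/15) * κ^2 * (1 + (5/6) * κ^2) := by
    have := mul_le_mul_of_nonneg_right (mul_le_mul_of_nonneg_right hcc ht0) hBpos
    linarith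
  refine step4.trans ?_
  have htt : κ^2 * κ^2 ≤ (1/4) * κ^2 := mul_le_mul_of_nonneg_right ht ht0
  nlinarith [htt, ht, ht0]

lemma Pj_CS (hk : 0 < κ) (hn : 2 ≤ n) :
    2 * phiHat n κ 1 * phiHat n κ 1 ≤ phiHat n κ 0 * (phiHat n κ 0 + phiHat n κ 2) := by
  have hn0 : 0 < n := by omega
  have := phiHat_CS hn0 hk.le
  nlinarith [this]

lemma Pj (hk : 0 < κ) (hh : κ ≤ 1/2) (hn : 2 ≤ n) {j : ℕ} (hj1 : 1 ≤ j) (hjn : j < n) :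
    2 * phiHat n κ 1 * phiHat n κ (j:ℤ)
      ≤ phiHat n κ 0 * (phiHat n κ ((j:ℤ)-1) + phiHat n κ ((j:ℤ)+1)) := by
  have hn0 : 0 < n := by omega
  have hk0 : (0:ℝ) ≤ κ := hk.le
  by_cases hc1 : j = 1
  · subst hc1
    have e1 : (((1:ℕ):ℤ)) - 1 = 0 := by norm_num
    have e2 : (((1:ℕ):ℤ)) + 1 = 2 := by norm_num
    have e3 : (((1:ℕ):ℤ)) = 1 := by norm_num
    rw [e1, e2, e3]
    exact Pj_CS hk hn
  by_cases hc2 : j = n - 1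
  · subst hc2
    have e0 : (((n-1:ℕ)):ℤ) = (n:ℤ) - 1 := by push_cast [Nat.cast_sub (by omega : 1 ≤ n)]; ring
    have e1 : phiHat n κ (((n-1:ℕ)):ℤ) = phiHat n κ 1 := by rw [e0, phiHat_nsub hn0]
    have e2 : phiHat n κ ((((n-1:ℕ)):ℤ) - 1) = phiHat n κ 2 := by
      rw [e0, show (n:ℤ) - 1 - 1 = (n:ℤ) - 2 by ring, phiHat_nsub hn0]
    have e3 : phiHat n κ ((((n-1:ℕ)):ℤ) + 1) = phiHat n κ 0 := by
      rw [e0, show (n:ℤ) - 1 + 1 = 0 + (n:ℤ) by ring, phiHat_periodic hn0]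
    rw [e1, e2, e3]
    have := Pj_CS hk hn
    nlinarith [this]
  -- middle case : 2 ≤ j ≤ n-2, hence n ≥ 4
  have hj2 : 2 ≤ j := by omega
  have hjn2 : j ≤ n - 2 := by omega
  have hn4 : 4 ≤ n := by omega
  set P := (1-κ^n)⁻¹ with hPdef
  set Q := (1-κ^2)⁻¹ with hQdef
  have hP0 : (0:ℝ) ≤ P := P_nonneg hk0 hh hn
  have hQ0 : (0:ℝ) ≤ Q := le_trans zero_le_one (Q_ge hk0 hh)
  have hPle : P ≤ 16/15 := P_le hk0 hh hn4
  have hQle : Q ≤ 4/3 := Q_le hk0 hh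
  -- index conversions
  have ej1 : ((j:ℤ)) - 1 = (((j-1:ℕ)):ℤ) := by push_cast [Nat.cast_sub (by omega : 1 ≤ j)]; ring
  have ej2 : ((j:ℤ)) + 1 = (((j+1:ℕ)):ℤ) := by push_cast; ring
  -- lower bounds
  have hlow0 : 1 + κ^2 ≤ phiHat n κ 0 := phiHat_zero_ge hn hk0
  have hlowm : cc κ (j-1) ≤ phiHat n κ (((j-1:ℕ)):ℤ) := by
    refine le_trans ?_ (phiHat_ge (by omega) (by omega) hk0)
    have := cc_nonneg hk0 (n-(j-1))
    linarith
  have hlowp : cc κ (n-j-1) ≤ phiHat n κ (((j+1:ℕ)):ℤ) := by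
    refine le_trans ?_ (phiHat_ge (by omega) (by omega) hk0)
    have e : n - (j+1) = n - j - 1 := by omega
    rw [e]
    have := cc_nonneg hk0 (j+1)
    linarith
  -- upper bounds
  have hup1 : phiHat n κ 1 ≤ P^2 * (κ * (1 + κ^2 * Q / 2) + cc κ (n-1)) :=
    phiHat_one_leU hk hh hn
  have hupj : phiHat n κ (j:ℤ) ≤ P^2 * Q * (cc κ j + cc κ (n-j)) :=
    phiHat_leU hk hh hn hj1 hjn
  -- reduce cc j and cc (n-j)
  have hccj : cc κ j ≤ (κ/2) * cc κ (j-1) := by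
    have := cc_step hk0 (m := j-1) (by omega)
    have e : j - 1 + 1 = j := by omega
    rwa [e] at this
  have hccnj : cc κ (n-j) ≤ (κ/2) * cc κ (n-j-1) := by
    have := cc_step hk0 (m := n-j-1) (by omega)
    have e : n - j - 1 + 1 = n - j := by omega
    rwa [e] at this
  have hccn1 : cc κ (n-1) ≤ κ * κ^2 / 6 := cc_nm1_le hk0 hh hn4
  set X := cc κ (j-1) + cc κ (n-j-1) with hXdef
  have hX0 : 0 < X := by
    have := cc_pos hk (j-1)
    have := cc_nonneg hk0 (n-j-1)
    rw [hXdef]; linarith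
  -- nonnegativity of phiHat values
  have hp1 : 0 ≤ phiHat n κ 1 := phiHat_nonneg hk0 1
  have hpj : 0 ≤ phiHat n κ (j:ℤ) := phiHat_nonneg hk0 _
  -- combine upper bounds
  have hup1' : phiHat n κ 1 ≤ P^2 * κ * (1 + κ^2 * Q / 2 + κ^2/6) := by
    calc phiHat n κ 1 ≤ P^2 * (κ * (1 + κ^2 * Q / 2) + cc κ (n-1)) := hup1
      _ ≤ P^2 * (κ * (1 + κ^2 * Q / 2) + κ * κ^2/6) := by
          apply mul_le_mul_of_nonneg_left _ (pow_nonneg hP0 2)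
          linarith
      _ = P^2 * κ * (1 + κ^2 * Q / 2 + κ^2/6) := by ring
  have hupj' : phiHat n κ (j:ℤ) ≤ P^2 * Q * (κ/2) * X := by
    calc phiHat n κ (j:ℤ) ≤ P^2 * Q * (cc κ j + cc κ (n-j)) := hupj
      _ ≤ P^2 * Q * ((κ/2) * cc κ (j-1) + (κ/2) * cc κ (n-j-1)) := by
          apply mul_le_mul_of_nonneg_left _ (mul_nonneg (pow_nonneg hP0 2) hQ0)
          linarith
      _ = P^2 * Q * (κ/2) * X := by rw [hXdef]; ring
  -- the numeric core
  have hnum : P^4 * Q * κ^2 * (1 + κ^2 * Q / 2 + κ^2/6) ≤ 1 + κ^2 :=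
    numeric_core hk0 hh hP0 hQ0 hPle hQle
  -- put everything together
  have hRHS : (1 + κ^2) * X ≤ phiHat n κ 0 * (phiHat n κ ((j:ℤ)-1) + phiHat n κ ((j:ℤ)+1)) := by
    rw [ej1, ej2]
    apply mul_le_mul hlow0 _ hX0.le (le_trans (by positivity) hlow0)
    rw [hXdef]
    linarith
  have hLHS : 2 * phiHat n κ 1 * phiHat n κ (j:ℤ) ≤ (1 + κ^2) * X := by
    calc 2 * phiHat n κ 1 * phiHat n κ (j:ℤ)
        ≤ 2 * (P^2 * κ * (1 + κ^2 * Q / 2 + κ^2/6)) * (P^2 * Q * (κ/2) * X) := by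
          apply mul_le_mul
          · exact mul_le_mul_of_nonneg_left hup1' (by norm_num)
          · exact hupj'
          · exact hpj
          · positivity
      _ = (P^4 * Q * κ^2 * (1 + κ^2 * Q / 2 + κ^2/6)) * X := by ring
      _ ≤ (1 + κ^2) * X := mul_le_mul_of_nonneg_right hnum hX0.le
  linarith

lemma phiHat_le_one1 (hk : 0 < κ) (hh : κ ≤ 1/2) (hn : 2 ≤ n) {j : ℕ}
    (hj1 : 1 ≤ j) (hjn : j < n) : phiHat n κ (j:ℤ) ≤ phiHat n κ 1 := by
  have hn0 : 0 < n := by omega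
  have hk0 : (0:ℝ) ≤ κ := hk.le
  by_cases hc1 : j = 1
  · subst hc1; norm_num
  by_cases hc2 : j = n - 1
  · subst hc2
    have e0 : (((n-1:ℕ)):ℤ) = (n:ℤ) - 1 := by push_cast [Nat.cast_sub (by omega : 1 ≤ n)]; ring
    rw [e0, phiHat_nsub hn0]
  have hj2 : 2 ≤ j := by omega
  have hjn2 : j ≤ n - 2 := by omega
  have hn4 : 4 ≤ n := by omega
  set P := (1-κ^n)⁻¹ with hPdef
  set Q := (1-κ^2)⁻¹ with hQdef
  have hP0 : (0:ℝ) ≤ P := P_nonneg hk0 hh hn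
  have hQ0 : (0:ℝ) ≤ Q := le_trans zero_le_one (Q_ge hk0 hh)
  have hPle : P ≤ 16/15 := P_le hk0 hh hn4
  have hQle : Q ≤ 4/3 := Q_le hk0 hh
  have hupj : phiHat n κ (j:ℤ) ≤ P^2 * Q * (cc κ j + cc κ (n-j)) :=
    phiHat_leU hk hh hn hj1 hjn
  have hccj : cc κ j ≤ κ^2/2 := cc_le2 hk0 hh hj2
  have hccnj : cc κ (n-j) ≤ κ^2/2 := cc_le2 hk0 hh (by omega)
  have hlow1 : κ ≤ phiHat n κ 1 := by
    have h := phiHat_ge (n := n) (j := 1) (le_refl 1) (by omega) hk0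
    have e : (((1:ℕ)):ℤ) = 1 := by norm_num
    rw [e] at h
    have h2 := cc_nonneg hk0 (n-1)
    rw [cc_one] at h
    linarith
  have hnum : P^2 * Q * κ^2 ≤ κ := by
    have hP2 : P^2 ≤ (16/15:ℝ)^2 := pow_le_pow_left₀ hP0 hPle 2
    have ht : κ^2 ≤ κ * (1/2) := by nlinarith
    calc P^2 * Q * κ^2 ≤ (16/15:ℝ)^2 * (4/3) * κ^2 := by
          apply mul_le_mul _ (le_refl _) (sq_nonneg κ) (by norm_num)
          exact mul_le_mul hP2 hQle hQ0 (by norm_num)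
      _ ≤ κ := by nlinarith [ht, hk.le, sq_nonneg κ]
  calc phiHat n κ (j:ℤ) ≤ P^2 * Q * (cc κ j + cc κ (n-j)) := hupj
    _ ≤ P^2 * Q * κ^2 := by
        apply mul_le_mul_of_nonneg_left _ (mul_nonneg (pow_nonneg hP0 2) hQ0)
        linarith
    _ ≤ κ := hnum
    _ ≤ phiHat n κ 1 := hlow1

end Main


end S9

namespace S9

variable {n : ℕ} {κ β : ℝ}

lemma kappa_le_half (hk : 0 < κ) (h : κ * (1 + eps n κ) ≤ 1) : κ ≤ 1/2 := by
  have hE : κ + 1 ≤ Real.exp κ := Real.add_one_le_exp κ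
  have hE1 : (1:ℝ) ≤ Real.exp κ := by linarith [hk.le]
  have hMterm : (0:ℝ) ≤ κ^n * Real.exp κ / (Nat.factorial n : ℝ) := by
    have h1 : (0:ℝ) < (Nat.factorial n : ℝ) := by exact_mod_cast Nat.factorial_pos n
    have h2 : (0:ℝ) ≤ κ^n := pow_nonneg hk.le n
    positivity
  have hM : (1:ℝ) ≤ 1 + κ^n * Real.exp κ / (Nat.factorial n : ℝ) := by linarith
  have hM2 : (1:ℝ) ≤ (1 + κ^n * Real.exp κ / (Nat.factorial n : ℝ))^2 := by nlinarith
  have hfac : (1:ℝ) + 2*κ ≤ 1 + 2*κ*Real.exp κ := by nlinarith [hk.le]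
  have hbig : 1 + 2*κ ≤ 1 + eps n κ := by
    unfold eps
    have h1 : (0:ℝ) ≤ 1 + 2*κ*Real.exp κ := by nlinarith [hk.le]
    nlinarith [hM2, hfac, h1]
  have hfin : κ * (1 + 2*κ) ≤ 1 := by
    refine le_trans ?_ h
    have := mul_le_mul_of_nonneg_left hbig hk.le
    linarith
  nlinarith [hk.le]

lemma phiHat_pos_nat (hk : 0 < κ) (hn : 2 ≤ n) {j : ℕ} (hjn : j < n) :
    0 < phiHat n κ (j : ℤ) := by
  have hn0 : 0 < n := by omega
  rcases Nat.eq_zero_or_pos j with h0 | h1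
  · subst h0
    have := phiHat_zero_ge_one hn0 hk.le
    simp only [Nat.cast_zero]
    linarith
  · have := phiHat_ge h1 hjn hk.le
    have h2 := cc_pos hk j
    have h3 := cc_nonneg hk.le (n-j)
    linarith

lemma phi_le_phi1 (hk : 0 < κ) (hh : κ ≤ 1/2) (hn : 2 ≤ n) {j : ℕ}
    (hj1 : 1 ≤ j) (hjn : j < n) : phi n κ (j:ℤ) ≤ phi n κ 1 := by
  have hn0 : 0 < n := by omega
  have hF : 0 < phiHat n κ 0 := by
    have := phiHat_zero_ge_one hn0 hk.le
    linarith
  unfold phi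
  exact (div_le_div_iff_of_pos_right hF).mpr (phiHat_le_one1 hk hh hn hj1 hjn)

lemma xi_eq (hk : 0 < κ) (hh : κ ≤ 1/2) (hn : 2 ≤ n) : xi n κ = phi n κ 1 := by
  apply IsGreatest.csSup_eq
  constructor
  · refine ⟨1, ?_, by norm_num⟩
    simp only [Set.mem_Ico]
    omega
  · rintro x ⟨j, hj, rfl⟩
    simp only [Set.mem_Ico] at hj
    exact phi_le_phi1 hk hh hn hj.1 hj.2

end S9

namespace S9

lemma Wle_aux {a b c : ℝ} (hap : 0 < a) (hbp : 0 < b) (hac : a ≤ c) (hbc : b ≤ c)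
    (hc1 : c ≤ 1) (hcp : 0 < c) : a^3 * (b - c * a) / c ≤ c^2 := by
  rw [div_le_iff₀ hcp]
  have h3 : a^3 ≤ c^3 := pow_le_pow_left₀ hap.le hac 3
  have h4 : a^3 * b ≤ c^3 * c := mul_le_mul h3 hbc hbp.le (by positivity)
  have h5 : c^3 * c ≤ c^2 * c := by nlinarith [mul_nonneg (pow_nonneg hcp.le 2) (mul_nonneg hcp.le (by linarith : (0:ℝ) ≤ 1 - c))]
  nlinarith [mul_nonneg (mul_nonneg (pow_nonneg hap.le 3) hcp.le) hap.le]

lemma Wle_aux2 {c : ℝ} (hcp : 0 < c) (hc1 : c ≤ 1) : c^3 * (1 - c * c) / c ≤ c^2 := by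
  rw [div_le_iff₀ hcp]
  nlinarith [mul_nonneg (pow_nonneg hcp.le 3) (mul_nonneg hcp.le hcp.le)]

end S9

set_option maxHeartbeats 1600000 in
theorem statement9 (n : ℕ) (hn : 2 ≤ n) (β κ : ℝ) (hβ : 0 ≤ β) (hκ : 0 < κ)
    (h : κ * (1 + eps n κ) ≤ 1) :
    1 ≤ alpha n β κ ∧
      1 - (alpha n β κ)⁻¹ ≤ zeta n β * (xi n κ) ^ 2 ∧
      (zeta n β * (xi n κ) ^ 2 < 1 →
        alpha n β κ ≤ 1 / (1 - zeta n β * (xi n κ) ^ 2)) := by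
  have hn0 : 0 < n := by omega
  have hk0 : (0:ℝ) ≤ κ := hκ.le
  have hh : κ ≤ 1/2 := S9.kappa_le_half hκ h
  have hF1 : (1:ℝ) ≤ phiHat n κ 0 := S9.phiHat_zero_ge_one hn0 hk0
  have hFpos : (0:ℝ) < phiHat n κ 0 := by linarith
  have hb1 : (1:ℝ) ≤ phiHat n β 0 := S9.phiHat_zero_ge_one hn0 hβ
  have hbpos : (0:ℝ) < phiHat n β 0 := by linarith
  have hB : ∀ j : ℤ, 0 ≤ phi n β j := fun j => div_nonneg (S9.phiHat_nonneg hβ j) hbpos.le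
  have hB0 : phi n β 0 = 1 := div_self hbpos.ne'
  have hΦ0 : phi n κ 0 = 1 := div_self hFpos.ne'
  have hΦpos : ∀ j : ℕ, j < n → 0 < phi n κ (j:ℤ) :=
    fun j hj => div_pos (S9.phiHat_pos_nat hκ hn hj) hFpos
  have hΦ1pos : 0 < phi n κ 1 := by
    have := hΦpos 1 (by omega)
    simpa using this
  have hΦle1 : ∀ j : ℤ, phi n κ j ≤ 1 := fun j =>
    (div_le_one hFpos).mpr (S9.phiHat_le_zero hn0 hk0 j)
  have hΦsymm : ∀ j : ℤ, phi n κ ((n:ℤ) - j) = phi n κ j := fun j => by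
    unfold phi; rw [S9.phiHat_nsub hn0]
  have hBsymm : ∀ j : ℤ, phi n β ((n:ℤ) - j) = phi n β j := fun j => by
    unfold phi; rw [S9.phiHat_nsub hn0]
  have hΦn : phi n κ (n:ℤ) = 1 := by
    unfold phi
    rw [show ((n:ℤ)) = 0 + (n:ℤ) by ring, S9.phiHat_periodic hn0]
    exact div_self hFpos.ne'
  have hΦmax : ∀ j : ℕ, 1 ≤ j → j < n → phi n κ (j:ℤ) ≤ phi n κ 1 :=
    fun j h1 h2 => S9.phi_le_phi1 hκ hh hn h1 h2
  have hxi : xi n κ = phi n κ 1 := S9.xi_eq hκ hh hn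
  -- the key inequality in phi-form
  have hPjphi : ∀ j : ℕ, 1 ≤ j → j < n →
      0 ≤ phi n κ ((j:ℤ)+1) + phi n κ ((j:ℤ)-1) - 2 * phi n κ 1 * phi n κ (j:ℤ) := by
    intro j hj1 hjn
    have hp := S9.Pj hκ hh hn hj1 hjn
    have key : phi n κ ((j:ℤ)+1) + phi n κ ((j:ℤ)-1) - 2 * phi n κ 1 * phi n κ (j:ℤ)
        = (phiHat n κ 0 * (phiHat n κ ((j:ℤ)-1) + phiHat n κ ((j:ℤ)+1))
            - 2 * phiHat n κ 1 * phiHat n κ (j:ℤ)) / (phiHat n κ 0)^2 := by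
      unfold phi
      field_simp
      ring
    rw [key]
    apply div_nonneg (by linarith) (sq_nonneg _)
  set W : ℕ → ℝ := fun j => (phi n κ (j:ℤ))^3
      * (phi n κ ((j:ℤ)+1) - phi n κ 1 * phi n κ (j:ℤ)) / phi n κ 1 with hW
  set T : ℕ → ℝ := fun j => phi n β (j:ℤ) * W j with hT
  set D := ∑ j ∈ Finset.range n, phi n β (j:ℤ) * (phi n κ (j:ℤ))^4 with hD
  set Nm := ∑ j ∈ Finset.range n, phi n β (j:ℤ) * (phi n κ (j:ℤ))^4 *
      (phi n κ ((j:ℤ)+1) / (phi n κ (j:ℤ) * phi n κ 1)) with hNm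
  have halpha : alpha n β κ = Nm / D := rfl
  have hterm_nonneg : ∀ j ∈ Finset.range n, 0 ≤ phi n β (j:ℤ) * (phi n κ (j:ℤ))^4 := by
    intro j _
    exact mul_nonneg (hB j) (by positivity)
  have hD1 : 1 ≤ D := by
    have h0 : (0:ℕ) ∈ Finset.range n := Finset.mem_range.mpr hn0
    have hval : phi n β ((0:ℕ):ℤ) * (phi n κ ((0:ℕ):ℤ))^4 = 1 := by
      simp only [Nat.cast_zero]
      rw [hB0, hΦ0]; norm_num
    calc (1:ℝ) = phi n β ((0:ℕ):ℤ) * (phi n κ ((0:ℕ):ℤ))^4 := hval.symm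
      _ ≤ D := by
          rw [hD]
          exact Finset.single_le_sum hterm_nonneg h0
  have hDpos : 0 < D := by linarith
  have hND : Nm - D = ∑ j ∈ Finset.range n, T j := by
    rw [hNm, hD, ← Finset.sum_sub_distrib]
    refine Finset.sum_congr rfl fun j hj => ?_
    have hj' := hΦpos j (Finset.mem_range.mp hj)
    simp only [hT, hW]
    field_simp
  have hT0 : T 0 = 0 := by
    simp only [hT, hW, Nat.cast_zero, zero_add, hΦ0]
    have e : phi n κ 1 - phi n κ 1 * 1 = 0 := by ring
    rw [e]
    simp
  have hTpair : ∀ j : ℕ, 1 ≤ j → j < n → 0 ≤ T j + T (n-j) := by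
    intro j hj1 hjn
    have hcast : (((n-j : ℕ)):ℤ) = (n:ℤ) - (j:ℤ) := by
      push_cast [Nat.cast_sub hjn.le]; ring
    have hBnj : phi n β (((n-j:ℕ)):ℤ) = phi n β (j:ℤ) := by rw [hcast]; exact hBsymm _
    have hΦnj : phi n κ (((n-j:ℕ)):ℤ) = phi n κ (j:ℤ) := by rw [hcast]; exact hΦsymm _
    have hΦnj1 : phi n κ ((((n-j:ℕ)):ℤ) + 1) = phi n κ ((j:ℤ) - 1) := by
      rw [hcast, show (n:ℤ) - (j:ℤ) + 1 = (n:ℤ) - ((j:ℤ) - 1) by ring]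
      exact hΦsymm _
    have hkey := hPjphi j hj1 hjn
    have hTj : T j + T (n-j) = phi n β (j:ℤ) * ((phi n κ (j:ℤ))^3 *
        (phi n κ ((j:ℤ)+1) + phi n κ ((j:ℤ)-1) - 2 * phi n κ 1 * phi n κ (j:ℤ))
          / phi n κ 1) := by
      simp only [hT, hW, hBnj, hΦnj, hΦnj1]
      ring
    rw [hTj]
    refine mul_nonneg (hB _) ?_
    refine div_nonneg ?_ hΦ1pos.le
    exact mul_nonneg (pow_nonneg (hΦpos j hjn).le 3) (by linarith)
  have hreindex : ∑ j ∈ Finset.Ico 1 n, T (n-j) = ∑ j ∈ Finset.Ico 1 n, T j := by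
    refine Finset.sum_nbij' (fun j => n - j) (fun j => n - j) ?_ ?_ ?_ ?_ ?_
    · intro a ha
      simp only [Finset.mem_Ico] at ha ⊢
      omega
    · intro a ha
      simp only [Finset.mem_Ico] at ha ⊢
      omega
    · intro a ha
      simp only [Finset.mem_Ico] at ha
      omega
    · intro a ha
      simp only [Finset.mem_Ico] at ha
      omega
    · intro a _
      rfl
  have hsplit : ∑ j ∈ Finset.range n, T j = T 0 + ∑ j ∈ Finset.Ico 1 n, T j := by
    rw [Finset.range_eq_Ico, Finset.sum_eq_sum_Ico_succ_bot hn0]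
  have hS_nonneg : 0 ≤ ∑ j ∈ Finset.range n, T j := by
    rw [hsplit, hT0, zero_add]
    have h2 : 2 * ∑ j ∈ Finset.Ico 1 n, T j = ∑ j ∈ Finset.Ico 1 n, (T j + T (n-j)) := by
      rw [Finset.sum_add_distrib, hreindex]; ring
    have h3 : 0 ≤ ∑ j ∈ Finset.Ico 1 n, (T j + T (n-j)) :=
      Finset.sum_nonneg fun j hj => by
        have hm := Finset.mem_Ico.mp hj
        exact hTpair j hm.1 hm.2
    linarith
  have hWle : ∀ j : ℕ, 1 ≤ j → j < n → W j ≤ (phi n κ 1)^2 := by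
    intro j hj1 hjn
    have h1 : phi n κ 1 ≤ 1 := hΦle1 1
    by_cases hc : j = n - 1
    · subst hc
      have e0 : (((n-1:ℕ)):ℤ) = (n:ℤ) - 1 := by
        push_cast [Nat.cast_sub (by omega : 1 ≤ n)]; ring
      have e1 : phi n κ (((n-1:ℕ)):ℤ) = phi n κ 1 := by
        rw [e0]; exact hΦsymm 1
      have e2 : phi n κ ((((n-1:ℕ)):ℤ)+1) = 1 := by
        rw [e0, show (n:ℤ)-1+1 = (n:ℤ) by ring]; exact hΦn
      simp only [hW, e1, e2]
      exact S9.Wle_aux2 hΦ1pos h1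
    · have hjn2 : j + 1 < n := by omega
      have hcast1 : (((j+1:ℕ)):ℤ) = (j:ℤ)+1 := by push_cast; ring
      have hb : phi n κ ((j:ℤ)+1) ≤ phi n κ 1 := by
        have := hΦmax (j+1) (by omega) hjn2
        rwa [hcast1] at this
      have ha : phi n κ (j:ℤ) ≤ phi n κ 1 := hΦmax j hj1 hjn
      have hap : 0 < phi n κ (j:ℤ) := hΦpos j hjn
      have hbp : 0 < phi n κ ((j:ℤ)+1) := by
        have := hΦpos (j+1) hjn2
        rwa [hcast1] at this
      simp only [hW]
      exact S9.Wle_aux hap hbp ha hb h1 hΦ1pos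
  have hS_le : ∑ j ∈ Finset.range n, T j ≤ zeta n β * (phi n κ 1)^2 := by
    rw [hsplit, hT0, zero_add]
    unfold zeta
    rw [Finset.sum_mul]
    apply Finset.sum_le_sum
    intro j hj
    obtain ⟨hj1, hjn⟩ := Finset.mem_Ico.mp hj
    simp only [hT]
    exact mul_le_mul_of_nonneg_left (hWle j hj1 hjn) (hB j)
  have hNm1 : 1 ≤ Nm := by linarith [hND, hS_nonneg, hD1]
  have hNmpos : 0 < Nm := by linarith
  have key2 : 1 - (alpha n β κ)⁻¹ ≤ zeta n β * (phi n κ 1)^2 := by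
    rw [halpha, inv_div]
    have hsum : D / Nm + (∑ j ∈ Finset.range n, T j) / Nm = 1 := by
      rw [← add_div, show D + ∑ j ∈ Finset.range n, T j = Nm by linarith [hND],
        div_self hNmpos.ne']
    have hle : (∑ j ∈ Finset.range n, T j) / Nm ≤ ∑ j ∈ Finset.range n, T j :=
      div_le_self hS_nonneg hNm1
    linarith [hS_le]
  refine ⟨?_, ?_, ?_⟩
  · rw [halpha, le_div_iff₀ hDpos]
    linarith [hND, hS_nonneg]
  · rw [hxi]
    exact key2
  · intro hz
    rw [hxi] at hz ⊢
    have hαpos : 0 < alpha n β κ := by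
      rw [halpha]
      exact div_pos hNmpos hDpos
    have hinvge : 1 - zeta n β * (phi n κ 1)^2 ≤ (alpha n β κ)⁻¹ := by linarith [key2]
    have hzpos : 0 < 1 - zeta n β * (phi n κ 1)^2 := by linarith
    have hfin := inv_anti₀ hzpos hinvge
    rw [inv_inv] at hfin
    rw [one_div]
    exact hfin
end
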